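/- arXiv:2303.15685 — 12 statements merged into one kernel-verified Lean document; each statement's English description precedes it below -/
import Mathlib

section
/- Let D be an Egyptian integral domain and let W be a multiplicative subset of the polynomial ring D[X] with 0 ∉ W such that W is not contained in D (i.e., W contains a polynomial of positive degree). Then the localization D[X]_W is an Egyptian domain. -/
universe u

/-- A commutative ring `D` is *Egyptian* if every nonzero `d : D` is a sum of reciprocals
`d = 1/d₁ + ⋯ + 1/dₙ` of finitely many pairwise distinct nonzero elements `dᵢ` of `D`, the
equality holding in any field in which `D` embeds.  (For an integral domain `D` this is
equivalent to the usual definition, in which the equality is required in the fraction field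
of `D`: such an equality holds in one field containing `D` iff it holds in all of them.) -/
def IsEgyptian (D : Type u) [CommRing D] : Prop :=
  ∀ d : D, d ≠ 0 → ∃ s : Finset D, (∀ i ∈ s, i ≠ 0) ∧
    ∀ (K : Type u) [Field K] (φ : D →+* K), Function.Injective φ →
      φ d = ∑ i ∈ s, (φ i)⁻¹

/-- A domain `D` is *generically Egyptian* if `D[1/f]` is Egyptian for some nonzero `f : D`. -/
def IsGenericallyEgyptian (D : Type u) [CommRing D] : Prop :=
  ∃ f : D, f ≠ 0 ∧ IsEgyptian (Localization.Away f)

/-- A domain `D` is *locally Egyptian* if there is a finite set of generators of the unit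
ideal of `D` such that inverting any one of them yields an Egyptian ring. -/
def IsLocallyEgyptian (D : Type u) [CommRing D] : Prop :=
  ∃ s : Finset D, Ideal.span (s : Set D) = ⊤ ∧
    ∀ f ∈ s, IsEgyptian (Localization.Away f)

/-!
Let `R = D[X]_W` and let `E` be the subring of `Frac R` of all sums of unit fractions `1/r`,
`r ∈ R`, repetitions allowed. Since `D` is Egyptian, `E` contains `D`; it contains `1/X`, and
the unit `w ∈ W` of positive degree `m` with leading coefficient `c`; dividing
`w = c Xᵐ + ⋯` by `c Xᵐ⁻¹` then writes `X` in terms of these, so `E ⊇ D[X]`, and with the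
inverses of `W` also `E ⊇ R`. The powers of `w` give infinitely many units `u` of `R`, so a
repeated `1/d` can be split as `1/(d + u) + 1/(d + d²/u)` with both new denominators fresh:
repetitions can be removed.
-/

open Polynomial Filter

/-- Denominators `0` are harmless: `(0 : K)⁻¹ = 0`. -/
def unitFractionSubring (R K : Type*) [CommRing R] [Field K] [Algebra R K] : Subring K where
  carrier := {x | ∃ l : Multiset R, (l.map fun d => (algebraMap R K d)⁻¹).sum = x}
  zero_mem' := ⟨0, by simp⟩
  one_mem' := ⟨{1}, by simp⟩
  add_mem' := by
    rintro _ _ ⟨l, rfl⟩ ⟨l', rfl⟩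
    exact ⟨l + l', by simp⟩
  neg_mem' := by
    rintro _ ⟨l, rfl⟩
    exact ⟨l.map Neg.neg, by simp [Multiset.sum_map_neg]⟩
  mul_mem' := by
    rintro _ _ ⟨l, rfl⟩ ⟨l', rfl⟩
    refine ⟨l.bind fun d => l'.map (d * ·), ?_⟩
    simp only [Multiset.map_bind, Multiset.sum_bind, Multiset.map_map, Function.comp_def, map_mul,
      mul_inv, Multiset.sum_map_mul_left, Multiset.sum_map_mul_right]

section UnitFractions

variable {R K : Type*} [CommRing R] [Field K] [Algebra R K]

theorem inv_algebraMap_mem_unitFractionSubring (d : R) :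
    (algebraMap R K d)⁻¹ ∈ unitFractionSubring R K :=
  ⟨{d}, by simp⟩

theorem algebraMap_unit_mem_unitFractionSubring (u : Rˣ) :
    algebraMap R K u ∈ unitFractionSubring R K := by
  simpa [map_units_inv] using inv_algebraMap_mem_unitFractionSubring (K := K) (u⁻¹ : Rˣ).val

variable (R) in
theorem inv_algebraMap_mem_unitFractionSubring_of_isScalarTower {A : Type*} [CommSemiring A]
    [Algebra A R] [Algebra A K] [IsScalarTower A R K] (a : A) :
    (algebraMap A K a)⁻¹ ∈ unitFractionSubring R K := by
  rw [IsScalarTower.algebraMap_apply A R K]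
  exact inv_algebraMap_mem_unitFractionSubring _

theorem algebraMap_mem_unitFractionSubring_of_isUnit {A : Type*} [CommSemiring A]
    [Algebra A R] [Algebra A K] [IsScalarTower A R K] {a : A} (ha : IsUnit (algebraMap A R a)) :
    algebraMap A K a ∈ unitFractionSubring R K := by
  rw [IsScalarTower.algebraMap_apply A R K, ← ha.unit_spec]
  exact algebraMap_unit_mem_unitFractionSubring _

theorem inv_eq_inv_add_add_inv_add_sq_mul_inv {F : Type*} [Field F] {a b : F} (ha : a ≠ 0)
    (hb : b ≠ 0) (hab : a + b ≠ 0) : a⁻¹ = (a + b)⁻¹ + (a + a ^ 2 * b⁻¹)⁻¹ := by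
  rw [show a + a ^ 2 * b⁻¹ = a * (a + b) / b by field_simp; ring]
  field_simp

variable [IsDomain R] [Infinite Rˣ]

theorem exists_inv_eq_inv_add_inv (hinj : Function.Injective (algebraMap R K)) {d : R}
    (hd : d ≠ 0) (s : Finset R) :
    ∃ d₁ d₂ : R, d₁ ∉ s ∧ d₂ ∉ s ∧ d₁ ≠ d₂ ∧
      (algebraMap R K d)⁻¹ = (algebraMap R K d₁)⁻¹ + (algebraMap R K d₂)⁻¹ := by
  classical
  have hfin (T : Finset R) : ∀ᶠ r in cofinite, r ∉ (T : Set R) :=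
    T.finite_toSet.eventually_cofinite_notMem
  have h₁ : Function.Injective fun u : Rˣ => d + u := fun a b h => Units.ext (add_left_cancel h)
  have h₂ : Function.Injective fun u : Rˣ => d + d ^ 2 * ↑u⁻¹ := fun a b h =>
    inv_injective (Units.ext (mul_left_cancel₀ (pow_ne_zero 2 hd) (add_left_cancel h)))
  -- all but finitely many units `u` are good choices in `d₁ = d + u`, `d₂ = d + d²/u`
  obtain ⟨u, hu₁, hu₂, hu₃⟩ : ∃ u : Rˣ, d + u ∉ insert 0 s ∧ d + d ^ 2 * ↑u⁻¹ ∉ s ∧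
      (u : R) ∉ ({d, -d} : Finset R) :=
    ((h₁.tendsto_cofinite.eventually (hfin _)).and ((h₂.tendsto_cofinite.eventually (hfin _)).and
      (Units.val_injective.tendsto_cofinite.eventually (hfin _)))).exists
  simp only [Finset.mem_insert, Finset.mem_singleton, not_or] at hu₁ hu₃
  refine ⟨d + u, d + d ^ 2 * ↑u⁻¹, hu₁.2, hu₂, fun h => ?_, ?_⟩
  · have : (u : R) ^ 2 = d ^ 2 := by
      nth_rw 1 [sq, add_left_cancel h]
      exact Units.inv_mul_cancel_right _ _
    exact (sq_eq_sq_iff_eq_or_eq_neg.1 this).elim hu₃.1 hu₃.2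
  · have hK {r : R} : r ≠ 0 → algebraMap R K r ≠ 0 := (map_ne_zero_iff _ hinj).2
    rw [map_add, map_add, map_mul, map_pow, map_units_inv]
    exact inv_eq_inv_add_add_inv_add_sq_mul_inv (hK hd) (hK u.ne_zero)
      (map_add (algebraMap R K) d u ▸ hK hu₁.1)

theorem exists_finset_sum_inv_eq_multiset_sum_inv (hinj : Function.Injective (algebraMap R K))
    (l : Multiset R) : ∃ s : Finset R, 0 ∉ s ∧
      (l.map fun d => (algebraMap R K d)⁻¹).sum = ∑ d ∈ s, (algebraMap R K d)⁻¹ := by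
  classical
  induction l using Multiset.induction_on with
  | empty => exact ⟨∅, by simp, by simp⟩
  | cons d l ih =>
    obtain ⟨s, hs0, hs⟩ := ih
    rcases eq_or_ne d 0 with rfl | hd
    · exact ⟨s, hs0, by simpa using hs⟩
    obtain ⟨d₁, d₂, hd₁, hd₂, hd₁₂, hsplit⟩ := exists_inv_eq_inv_add_inv hinj hd (insert 0 s)
    simp only [Finset.mem_insert, not_or] at hd₁ hd₂
    refine ⟨insert d₁ (insert d₂ s), by simp [hs0, Ne.symm hd₁.1, Ne.symm hd₂.1], ?_⟩
    rw [Finset.sum_insert (by simp [hd₁₂, hd₁.2]), Finset.sum_insert hd₂.2, Multiset.map_cons,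
      Multiset.sum_cons, hs, hsplit, add_assoc]

theorem isEgyptian_of_forall_algebraMap_mem_unitFractionSubring [IsFractionRing R K]
    (h : ∀ r : R, algebraMap R K r ∈ unitFractionSubring R K) : IsEgyptian R := by
  intro r _
  obtain ⟨l, hl⟩ := h r
  obtain ⟨s, hs0, hs⟩ :=
    exists_finset_sum_inv_eq_multiset_sum_inv (IsFractionRing.injective R K) l
  refine ⟨s, fun i hi h => hs0 (h ▸ hi), fun L _ φ hφ => ?_⟩
  -- the identity in `K` is carried to `L` along the field embedding `K → L` extending `φ`
  simpa [map_sum, IsFractionRing.lift_algebraMap] using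
    congrArg (IsFractionRing.lift (K := K) hφ) (hl.symm.trans hs)

end UnitFractions

theorem Subring.mem_of_inv_mem_of_eval_mem {K : Type*} [Field K] {S : Subring K} {x : K}
    {q : K[X]} (hq : 0 < q.natDegree) (hcoeff : ∀ i, q.coeff i ∈ S)
    (hlead : q.leadingCoeff⁻¹ ∈ S) (hx : x⁻¹ ∈ S) (heval : q.eval x ∈ S) : x ∈ S := by
  rcases eq_or_ne x 0 with rfl | hx0
  · exact S.zero_mem
  obtain ⟨m, hm⟩ := Nat.exists_eq_add_of_lt hq
  rw [zero_add] at hm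
  -- dividing `q(x) = c x^(m+1) + ∑_{i ≤ m} qᵢ xⁱ` by `c x^m` expresses `x` through `x⁻¹`
  have key : x = q.eval x * q.leadingCoeff⁻¹ * x⁻¹ ^ m
      - ∑ i ∈ Finset.range (m + 1), q.coeff i * q.leadingCoeff⁻¹ * x⁻¹ ^ (m - i) := by
    have hc : q.leadingCoeff ≠ 0 := leadingCoeff_ne_zero.2 (ne_zero_of_natDegree_gt hq)
    rw [eval_eq_sum_range, Finset.sum_range_succ, ← hm, coeff_natDegree, hm, add_mul, add_mul,
      Finset.sum_mul, Finset.sum_mul, add_sub_right_comm, ← Finset.sum_sub_distrib,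
      Finset.sum_eq_zero fun i hi => ?_]
    · simp only [inv_pow]; field_simp; ring
    · obtain ⟨k, rfl⟩ := Nat.exists_eq_add_of_le (Finset.mem_range_succ_iff.1 hi)
      rw [Nat.add_sub_cancel_left]
      simp only [inv_pow]; field_simp; ring
  rw [key]
  exact sub_mem (mul_mem (mul_mem heval hlead) (pow_mem hx _))
    (sum_mem fun i _ => mul_mem (mul_mem (hcoeff i) hlead) (pow_mem hx _))

theorem IsLocalization.injective_of_nontrivial {A : Type*} [CommRing A] [IsDomain A]
    (M : Submonoid A) (S : Type*) [CommRing S] [Nontrivial S] [Algebra A S] [IsLocalization M S] :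
    Function.Injective (algebraMap A S) :=
  IsLocalization.injective S <| le_nonZeroDivisors_of_noZeroDivisors fun h0 => by
    simpa using IsLocalization.map_units S (⟨0, h0⟩ : M)

theorem infinite_units_of_isUnit {D R : Type*} [CommRing D] [IsDomain D] [CommRing R]
    [Algebra D[X] R] (hinj : Function.Injective (algebraMap D[X] R)) {w : D[X]}
    (hw : IsUnit (algebraMap D[X] R w)) (hm : 0 < w.natDegree) : Infinite Rˣ := by
  refine Infinite.of_injective (fun n : ℕ => hw.unit ^ n) fun a b h => ?_
  have := congrArg Units.val h
  simp only [Units.val_pow_eq_pow_val, IsUnit.unit_spec, ← map_pow] at this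
  have := congrArg natDegree (hinj this)
  rw [natDegree_pow, natDegree_pow] at this
  exact Nat.eq_of_mul_eq_mul_right hm this

section PolynomialExtension

variable {D : Type u} [CommRing D] {R : Type*} [CommRing R] [Algebra D[X] R]
  {K : Type u} [Field K] [Algebra R K] [IsFractionRing R K] [Algebra D[X] K]
  [IsScalarTower D[X] R K]

theorem injective_algebraMap_comp_C (hinj : Function.Injective (algebraMap D[X] R)) :
    Function.Injective ((algebraMap D[X] K).comp C) := by
  rw [IsScalarTower.algebraMap_eq D[X] R K]
  exact (IsFractionRing.injective R K).comp (hinj.comp C_injective)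

theorem algebraMap_C_mem_unitFractionSubring (hD : IsEgyptian D)
    (hinj : Function.Injective (algebraMap D[X] R)) (a : D) :
    algebraMap D[X] K (C a) ∈ unitFractionSubring R K := by
  rcases eq_or_ne a 0 with rfl | ha
  · simp
  obtain ⟨s, -, hs⟩ := hD a ha
  have hinjK := injective_algebraMap_comp_C (K := K) hinj
  rw [← RingHom.comp_apply, hs K _ hinjK]
  exact sum_mem fun i _ => inv_algebraMap_mem_unitFractionSubring_of_isScalarTower R (C i)

theorem algebraMap_X_mem_unitFractionSubring (hD : IsEgyptian D)
    (hinj : Function.Injective (algebraMap D[X] R))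
    {w : D[X]} (hw : IsUnit (algebraMap D[X] R w)) (hm : 0 < w.natDegree) :
    algebraMap D[X] K X ∈ unitFractionSubring R K := by
  have hinjK := injective_algebraMap_comp_C (K := K) hinj
  refine Subring.mem_of_inv_mem_of_eval_mem (q := w.map ((algebraMap D[X] K).comp C))
    ?_ (fun i => ?_) ?_ (inv_algebraMap_mem_unitFractionSubring_of_isScalarTower R X) ?_
  · rwa [natDegree_map_eq_of_injective hinjK]
  · rw [coeff_map]
    exact algebraMap_C_mem_unitFractionSubring hD hinj _
  · rw [leadingCoeff_map_of_injective hinjK]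
    exact inv_algebraMap_mem_unitFractionSubring_of_isScalarTower R _
  · rw [eval_map, ← hom_eval₂, eval₂_C_X]
    exact algebraMap_mem_unitFractionSubring_of_isUnit hw

theorem algebraMap_polynomial_mem_unitFractionSubring (hD : IsEgyptian D)
    (hinj : Function.Injective (algebraMap D[X] R)) {w : D[X]}
    (hw : IsUnit (algebraMap D[X] R w)) (hm : 0 < w.natDegree) (p : D[X]) :
    algebraMap D[X] K p ∈ unitFractionSubring R K := by
  rw [p.as_sum_range_C_mul_X_pow, map_sum]
  refine sum_mem fun i _ => ?_
  rw [map_mul, map_pow]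
  exact mul_mem (algebraMap_C_mem_unitFractionSubring hD hinj _)
    (pow_mem (algebraMap_X_mem_unitFractionSubring hD hinj hw hm) _)

theorem algebraMap_mem_unitFractionSubring_of_isLocalization [IsDomain D] [Nontrivial R]
    {W : Submonoid D[X]} [IsLocalization W R] (hD : IsEgyptian D) {w : D[X]} (hw : w ∈ W)
    (hm : 0 < w.natDegree) (r : R) :
    algebraMap R K r ∈ unitFractionSubring R K := by
  obtain ⟨⟨p, v⟩, rfl⟩ := IsLocalization.mk'_surjective W r
  have hv : algebraMap D[X] K v ≠ 0 := by
    rw [IsScalarTower.algebraMap_apply D[X] R K]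
    exact ((IsLocalization.map_units R v).map (algebraMap R K)).ne_zero
  have hfrac := congrArg (algebraMap R K) (IsLocalization.mk'_spec R p v)
  rw [map_mul, ← IsScalarTower.algebraMap_apply, ← IsScalarTower.algebraMap_apply,
    ← eq_mul_inv_iff_mul_eq₀ hv] at hfrac
  rw [hfrac]
  have hinj := IsLocalization.injective_of_nontrivial W R
  exact mul_mem (algebraMap_polynomial_mem_unitFractionSubring hD hinj
    (IsLocalization.map_units R (⟨w, hw⟩ : W)) hm p)
    (inv_algebraMap_mem_unitFractionSubring_of_isScalarTower R _)

end PolynomialExtension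

/-- If `D` is an Egyptian domain and `W` is a multiplicative subset of `D[X]` not containing
`0` and not contained in `D` (i.e. containing a polynomial of positive degree), then the
localization `D[X]_W` is Egyptian. -/
theorem statement0 (D : Type u) [CommRing D] [IsDomain D] (hD : IsEgyptian D)
    (W : Submonoid (Polynomial D)) (h0 : (0 : Polynomial D) ∉ W)
    (hW : ∃ w ∈ W, 0 < w.natDegree) :
    IsEgyptian (Localization W) := by
  have := IsLocalization.isDomain_localization (le_nonZeroDivisors_of_noZeroDivisors h0)
  obtain ⟨w, hw, hm⟩ := hW
  have := infinite_units_of_isUnit (IsLocalization.injective_of_nontrivial W _)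
    (IsLocalization.map_units (Localization W) (⟨w, hw⟩ : W)) hm
  exact isEgyptian_of_forall_algebraMap_mem_unitFractionSubring
    (K := FractionRing (Localization W))
    (algebraMap_mem_unitFractionSubring_of_isLocalization hD hw hm)
end

section
/- Let G be a totally ordered abelian group, let Γ be the monoid of nonnegative elements of G (elements g with g ≥ 0), and let D be an integral domain equipped with a nontrivial Γ-grading (i.e., D = ⊕_{g∈Γ} D_g with D_g · D_h ⊆ D_{g+h}, and D ≠ D₀). Then D is not Egyptian. -/
universe u

/-! The top homogeneous component is multiplicative in a domain graded by a linearly ordered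
cancellative monoid, so `x ↦ exp (top degree of x)` is a valuation `v`. If all degrees are
nonnegative, `v ≥ 1` on nonzero elements, while `v d > 1` for a nonzero homogeneous `d` of
positive degree. Clearing denominators in `d = ∑ 1/dᵢ` gives `d · ∏ dᵢ = ∑ᵢ ∏_{j ≠ i} dⱼ`: the left
side has valuation `v d · v (∏ dᵢ) > v (∏ dᵢ)`, but every summand on the right has valuation at
most `v (∏ dᵢ)`. -/

open WithZero

namespace DirectSum

variable {ι σ D : Type*} [DecidableEq ι] [Ring D] [SetLike σ D] [AddSubmonoidClass σ D]
  (𝒜 : ι → σ) [Decomposition 𝒜]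

theorem exists_decompose_ne_zero_of_notMem {i₀ : ι} {y : D} (hy : y ∉ 𝒜 i₀) :
    ∃ i ≠ i₀, decompose 𝒜 y i ≠ 0 := by
  classical
  by_contra! h
  refine hy (sum_support_decompose 𝒜 y ▸ sum_mem fun i hi => ?_)
  obtain rfl : i = i₀ := by_contra fun hi₀ => DFinsupp.mem_support_iff.1 hi (h i hi₀)
  exact SetLike.coe_mem _

theorem coe_decompose_mul_apply [AddMonoid ι] [SetLike.GradedMul 𝒜]
    [∀ i (x : 𝒜 i), Decidable (x ≠ 0)] (x y : D) (k : ι) :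
    (decompose 𝒜 (x * y) k : D) =
      ∑ ij ∈ (decompose 𝒜 x).support ×ˢ (decompose 𝒜 y).support with ij.1 + ij.2 = k,
        (decompose 𝒜 x ij.1 : D) * decompose 𝒜 y ij.2 := by
  conv_lhs => rw [← sum_support_decompose 𝒜 x, ← sum_support_decompose 𝒜 y,
    Finset.sum_mul_sum, ← Finset.sum_product']
  rw [decompose_sum, DFinsupp.finsetSum_apply, AddSubmonoidClass.coe_finsetSum,
    Finset.sum_filter]
  refine Finset.sum_congr rfl fun ij _ => ?_
  have hmem := SetLike.mul_mem_graded (decompose 𝒜 x ij.1).2 (decompose 𝒜 y ij.2).2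
  split_ifs with h
  · exact decompose_of_mem_same 𝒜 (h ▸ hmem)
  · exact decompose_of_mem_ne 𝒜 hmem h

variable {𝒜} [LinearOrder ι]

theorem exists_isGreatest_decompose_ne_zero {x : D} (hx : x ≠ 0) :
    ∃ a, IsGreatest {i | decompose 𝒜 x i ≠ 0} a := by
  classical
  have hne : (decompose 𝒜 x).support.Nonempty := by
    rw [Finset.nonempty_iff_ne_empty]
    intro h
    exact hx (by rw [← sum_support_decompose 𝒜 x, h, Finset.sum_empty])
  exact ⟨_, DFinsupp.mem_support_iff.1 (Finset.max'_mem _ hne),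
    fun i hi => Finset.le_max' _ i (DFinsupp.mem_support_iff.2 hi)⟩

variable (𝒜) in
open scoped Classical in
noncomputable def expTopDegree (x : D) : ιᵐ⁰ :=
  (decompose 𝒜 x).support.sup exp

theorem expTopDegree_eq_exp {x : D} {a : ι} (ha : IsGreatest {i | decompose 𝒜 x i ≠ 0} a) :
    expTopDegree 𝒜 x = exp a := by
  classical
  exact le_antisymm
    (Finset.sup_le fun i hi => exp_le_exp.2 (ha.2 (DFinsupp.mem_support_iff.1 hi)))
    (Finset.le_sup (f := exp) (DFinsupp.mem_support_iff.2 ha.1))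

theorem expTopDegree_zero : expTopDegree 𝒜 (0 : D) = 0 := by
  simp [expTopDegree]

theorem expTopDegree_add_le (x y : D) :
    expTopDegree 𝒜 (x + y) ≤ max (expTopDegree 𝒜 x) (expTopDegree 𝒜 y) := by
  classical
  unfold expTopDegree
  rw [decompose_add, ← Finset.sup_union]
  exact Finset.sup_mono DFinsupp.support_add

variable [AddCommMonoid ι] [IsOrderedCancelAddMonoid ι] [SetLike.GradedMul 𝒜]

theorem coe_decompose_mul_add_of_mem_upperBounds {x y : D} {a b : ι}
    (ha : a ∈ upperBounds {i | decompose 𝒜 x i ≠ 0})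
    (hb : b ∈ upperBounds {j | decompose 𝒜 y j ≠ 0}) :
    (decompose 𝒜 (x * y) (a + b) : D) = decompose 𝒜 x a * decompose 𝒜 y b := by
  classical
  rw [coe_decompose_mul_apply, Finset.sum_eq_single (a, b)]
  · rintro ⟨i, j⟩ hij hne
    simp only [Finset.mem_filter, Finset.mem_product, DFinsupp.mem_support_iff] at hij
    obtain ⟨⟨hi, hj⟩, hsum⟩ := hij
    exact absurd (Prod.ext_iff.2 ((add_eq_add_iff_eq_and_eq (ha hi) (hb hj)).1 hsum)) hne
  · intro hab
    simp only [Finset.mem_filter, Finset.mem_product, DFinsupp.mem_support_iff, and_true,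
      not_and_or, not_not] at hab
    rcases hab with h | h <;> simp [h]

theorem decompose_mul_eq_zero_of_add_lt {x y : D} {a b k : ι}
    (ha : a ∈ upperBounds {i | decompose 𝒜 x i ≠ 0})
    (hb : b ∈ upperBounds {j | decompose 𝒜 y j ≠ 0}) (hk : a + b < k) :
    decompose 𝒜 (x * y) k = 0 := by
  classical
  rw [← ZeroMemClass.coe_eq_zero, coe_decompose_mul_apply]
  refine Finset.sum_eq_zero fun ij hij => absurd hk (not_lt.2 ?_)
  simp only [Finset.mem_filter, Finset.mem_product, DFinsupp.mem_support_iff] at hij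
  exact hij.2 ▸ add_le_add (ha hij.1.1) (hb hij.1.2)

theorem expTopDegree_mul [NoZeroDivisors D] (x y : D) :
    expTopDegree 𝒜 (x * y) = expTopDegree 𝒜 x * expTopDegree 𝒜 y := by
  rcases eq_or_ne x 0 with rfl | hx
  · simp [expTopDegree_zero]
  rcases eq_or_ne y 0 with rfl | hy
  · simp [expTopDegree_zero]
  obtain ⟨a, ha⟩ := exists_isGreatest_decompose_ne_zero (𝒜 := 𝒜) hx
  obtain ⟨b, hb⟩ := exists_isGreatest_decompose_ne_zero (𝒜 := 𝒜) hy
  have hab : IsGreatest {k | decompose 𝒜 (x * y) k ≠ 0} (a + b) := by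
    refine ⟨?_, fun k hk => not_lt.1 fun hlt => hk (decompose_mul_eq_zero_of_add_lt ha.2 hb.2 hlt)⟩
    change decompose 𝒜 (x * y) (a + b) ≠ 0
    rw [Ne, ← ZeroMemClass.coe_eq_zero,
      coe_decompose_mul_add_of_mem_upperBounds ha.2 hb.2]
    exact mul_ne_zero (ZeroMemClass.coe_eq_zero.not.2 ha.1) (ZeroMemClass.coe_eq_zero.not.2 hb.1)
  rw [expTopDegree_eq_exp ha, expTopDegree_eq_exp hb, expTopDegree_eq_exp hab, exp_add]

theorem expTopDegree_one [IsDomain D] : expTopDegree 𝒜 (1 : D) = 1 := by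
  obtain ⟨a, ha⟩ := exists_isGreatest_decompose_ne_zero (𝒜 := 𝒜) (one_ne_zero (α := D))
  have h := expTopDegree_mul (𝒜 := 𝒜) (1 : D) 1
  rw [mul_one, expTopDegree_eq_exp ha, ← exp_add, exp_inj, left_eq_add] at h
  rw [expTopDegree_eq_exp ha, h, exp_zero]

variable [IsDomain D]

variable (𝒜) in
noncomputable def topValuation : Valuation D ιᵐ⁰ where
  toFun := expTopDegree 𝒜
  map_zero' := expTopDegree_zero
  map_one' := expTopDegree_one
  map_mul' := expTopDegree_mul
  map_add_le_max' := expTopDegree_add_le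

theorem topValuation_apply_of_mem {x : D} {i : ι} (hx : x ∈ 𝒜 i) (hx0 : x ≠ 0) :
    topValuation 𝒜 x = exp i :=
  expTopDegree_eq_exp
    ⟨fun h => hx0 (by rw [← decompose_of_mem_same 𝒜 hx, h, ZeroMemClass.coe_zero]),
      fun j hj => le_of_eq (by_contra fun hne =>
        hj (ZeroMemClass.coe_eq_zero.1 (decompose_of_mem_ne 𝒜 hx (Ne.symm hne))))⟩

theorem one_le_topValuation (hι : ∀ i : ι, 0 ≤ i) {x : D} (hx : x ≠ 0) :
    1 ≤ topValuation 𝒜 x := by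
  obtain ⟨a, ha⟩ := exists_isGreatest_decompose_ne_zero (𝒜 := 𝒜) hx
  change 1 ≤ expTopDegree 𝒜 x
  rw [expTopDegree_eq_exp ha, ← exp_zero, exp_le_exp]
  exact hι a

end DirectSum

theorem IsEgyptian.exists_mul_prod_eq_sum_prod_erase {D : Type u} [CommRing D] [IsDomain D]
    [DecidableEq D] (hD : IsEgyptian D) {d : D} (hd : d ≠ 0) :
    ∃ s : Finset D, (∀ i ∈ s, i ≠ 0) ∧ d * ∏ i ∈ s, i = ∑ i ∈ s, ∏ j ∈ s.erase i, j := by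
  obtain ⟨s, hs0, hs⟩ := hD d hd
  let φ := algebraMap D (FractionRing D)
  have hφ : Function.Injective φ := IsFractionRing.injective D (FractionRing D)
  refine ⟨s, hs0, hφ ?_⟩
  rw [map_mul, map_sum, hs _ φ hφ, Finset.sum_mul]
  refine Finset.sum_congr rfl fun i hi => ?_
  rw [← Finset.mul_prod_erase s (fun j => j) hi, map_mul,
    inv_mul_cancel_left₀ ((map_ne_zero_iff φ hφ).2 (hs0 i hi))]

theorem Valuation.not_isEgyptian {D : Type u} [CommRing D] [IsDomain D]
    {Γ₀ : Type*} [LinearOrderedCommMonoidWithZero Γ₀] (v : Valuation D Γ₀)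
    (hv : ∀ x : D, x ≠ 0 → 1 ≤ v x) {d : D} (hd : 1 < v d) : ¬ IsEgyptian D := by
  classical
  intro hD
  have : Nontrivial Γ₀ := ⟨⟨1, v d, hd.ne⟩⟩
  have hd0 : d ≠ 0 := fun h => by simp [h] at hd
  obtain ⟨s, hs0, hs⟩ := hD.exists_mul_prod_eq_sum_prod_erase hd0
  have hP : 1 ≤ v (∏ i ∈ s, i) := hv _ (Finset.prod_ne_zero_iff.2 hs0)
  have hsum : v (∑ i ∈ s, ∏ j ∈ s.erase i, j) ≤ v (∏ i ∈ s, i) :=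
    v.map_sum_le fun i hi => by
      rw [← Finset.mul_prod_erase s (fun j => j) hi, v.map_mul]
      exact le_mul_of_one_le_left' (hv i (hs0 i hi))
  have hlt : v (∏ i ∈ s, i) < v (d * ∏ i ∈ s, i) := by
    rw [v.map_mul]
    exact lt_mul_of_one_lt_left (zero_lt_one.trans_le hP) hd
  exact (hs ▸ hlt).not_ge hsum

/-- If `G` is a totally ordered abelian group, `Γ` is the monoid of nonnegative elements of
`G`, and `D` is an integral domain equipped with a nontrivial `Γ`-grading (an internal
direct sum decomposition `D = ⊕_{g ∈ Γ} 𝒜 g` into additive subgroups with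
`𝒜 g * 𝒜 h ⊆ 𝒜 (g + h)` and `𝒜 0 ≠ D`), then `D` is not Egyptian. -/
theorem statement1 (G : Type*) [AddCommGroup G] [LinearOrder G] [IsOrderedAddMonoid G] [DecidableEq G]
    (Γ : AddSubmonoid G) (hΓ : ∀ g : G, g ∈ Γ ↔ 0 ≤ g)
    (D : Type u) [CommRing D] [IsDomain D]
    (𝒜 : Γ → AddSubgroup D)
    (hdirect : DirectSum.IsInternal 𝒜)
    (hmul : ∀ g h : Γ, ∀ x ∈ 𝒜 g, ∀ y ∈ 𝒜 h, x * y ∈ 𝒜 (g + h))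
    (hnontriv : 𝒜 0 ≠ ⊤) :
    ¬ IsEgyptian D := by
  let := hdirect.chooseDecomposition
  have : SetLike.GradedMul 𝒜 := ⟨fun {g h _ _} hx hy => hmul g h _ hx _ hy⟩
  have hΓ_nonneg (g : Γ) : 0 ≤ g := (hΓ g).1 g.2
  obtain ⟨y, hy⟩ := SetLike.exists_not_mem_of_ne_top _ hnontriv
  obtain ⟨g, hg, hyg⟩ := DirectSum.exists_decompose_ne_zero_of_notMem 𝒜 hy
  refine (DirectSum.topValuation 𝒜).not_isEgyptian
    (fun _ => DirectSum.one_le_topValuation hΓ_nonneg) (d := DirectSum.decompose 𝒜 y g) ?_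
  rw [DirectSum.topValuation_apply_of_mem (SetLike.coe_mem _) (ZeroMemClass.coe_eq_zero.not.2 hyg),
    ← exp_zero, exp_lt_exp]
  exact (hΓ_nonneg g).lt_of_ne' hg
end

section
/- Let n be a positive integer and let Λ be an additive submonoid of ℚⁿ. If the set ℝ_{≥0}Λ (the set of all finite sums ∑ rᵢλᵢ with rᵢ ∈ ℝ_{≥0} and λᵢ ∈ Λ, viewed as a subset of ℝⁿ) is a group under addition (i.e., is closed under negation), then Λ itself is a group (i.e., is closed under negation). -/
universe u

/-- The cone `ℝ_{≥0}Λ ⊆ ℝⁿ`: the set of all finite nonnegative real linear combinations of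
elements of `Λ ⊆ ℚⁿ`, viewed inside `ℝⁿ`. -/
def nonnegRealCone {n : ℕ} (Λ : AddSubmonoid (Fin n → ℚ)) : Set (Fin n → ℝ) :=
  { x | ∃ (t : ℕ) (r : Fin t → ℝ) (y : Fin t → Fin n → ℚ),
      (∀ i, 0 ≤ r i) ∧ (∀ i, y i ∈ Λ) ∧ x = ∑ i, fun j => r i * (y i j : ℝ) }

/-!
A rational point of the real cone spanned by finitely many rational vectors already lies in
their rational cone: by the conic Carathéodory theorem it is a nonnegative real combination of
an `ℝ`-linearly independent subfamily, whose coefficients are then the unique solution of a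
linear system with rational data, hence rational. So if `x ∈ Λ` and `-x ∈ ℝ_{≥0}Λ`, clearing
denominators gives `N • (-x) ∈ Λ` for some `N > 0`, and `-x = N • (-x) + (N - 1) • x ∈ Λ`.
-/

open Finset

section Caratheodory

variable {𝕜 V ι : Type*} [Field 𝕜] [LinearOrder 𝕜] [IsStrictOrderedRing 𝕜]
  [AddCommGroup V] [Module 𝕜 V] {v : ι → V}

theorem exists_nonneg_sum_erase_eq_of_not_linearIndepOn [DecidableEq ι] {s : Finset ι}
    (hs : ¬LinearIndepOn 𝕜 v s) {r : ι → 𝕜} (hr : ∀ i ∈ s, 0 ≤ r i) :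
    ∃ p ∈ s, ∃ r' : ι → 𝕜, (∀ i ∈ s.erase p, 0 ≤ r' i) ∧
      ∑ i ∈ s.erase p, r' i • v i = ∑ i ∈ s, r i • v i := by
  obtain ⟨d, hd, hpos⟩ : ∃ d : ι → 𝕜, ∑ i ∈ s, d i • v i = 0 ∧ ∃ i ∈ s, 0 < d i := by
    obtain ⟨d, hd, i, hi, hdi⟩ := not_linearIndepOn_finset_iff.1 hs
    rcases hdi.lt_or_gt with hneg | hpos
    · exact ⟨-d, by simp [sum_neg_distrib, hd], i, hi, neg_pos.2 hneg⟩
    · exact ⟨d, hd, i, hi, hpos⟩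
  obtain ⟨p, hp, hmin⟩ := (s.filter (0 < d ·)).exists_min_image (fun i => r i / d i) <| by
    obtain ⟨i, hi, hdi⟩ := hpos
    exact ⟨i, mem_filter.2 ⟨hi, hdi⟩⟩
  rw [mem_filter] at hp
  set μ := r p / d p
  refine ⟨p, hp.1, fun i => r i - μ * d i, fun i hi => ?_, ?_⟩
  · have his := mem_of_mem_erase hi
    by_cases hdi : 0 < d i
    · rw [sub_nonneg, ← le_div_iff₀ hdi]
      exact hmin i (mem_filter.2 ⟨his, hdi⟩)
    · have : μ * d i ≤ 0 :=
        mul_nonpos_of_nonneg_of_nonpos (div_nonneg (hr p hp.1) hp.2.le) (not_lt.1 hdi)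
      linarith [hr i his]
  · calc ∑ i ∈ s.erase p, (r i - μ * d i) • v i = ∑ i ∈ s, (r i - μ * d i) • v i :=
          sum_erase _ (by simp [μ, hp.2.ne'])
      _ = ∑ i ∈ s, r i • v i := by
          simp only [sub_smul, mul_smul, sum_sub_distrib, ← smul_sum, hd, smul_zero, sub_zero]

theorem exists_linearIndepOn_nonneg_sum_eq (s : Finset ι) (r : ι → 𝕜) (hr : ∀ i ∈ s, 0 ≤ r i) :
    ∃ t ⊆ s, LinearIndepOn 𝕜 v t ∧
      ∃ c : ι → 𝕜, (∀ i ∈ t, 0 ≤ c i) ∧ ∑ i ∈ t, c i • v i = ∑ i ∈ s, r i • v i := by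
  classical
  induction s using Finset.strongInduction generalizing r with
  | H s ih =>
    by_cases hs : LinearIndepOn 𝕜 v s
    · exact ⟨s, subset_rfl, hs, r, hr, rfl⟩
    · obtain ⟨p, hp, r', hr', hsum⟩ := exists_nonneg_sum_erase_eq_of_not_linearIndepOn hs hr
      obtain ⟨t, hts, ht, c, hc, hct⟩ := ih _ (s.erase_ssubset hp) r' hr'
      exact ⟨t, hts.trans (s.erase_subset p), ht, c, hc, hct.trans hsum⟩

end Caratheodory

theorem LinearIndependent.exists_algebraMap_eq_of_sum_eq {K L ι ι' : Type*} [Field K] [Field L]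
    [Algebra K L] [Fintype ι] [Finite ι'] {v : ι → ι' → K} (hv : LinearIndependent K v)
    {r : ι → L} {b : ι' → K} (h : ∑ i, r i • (algebraMap K L ∘ v i) = algebraMap K L ∘ b) :
    ∃ q : ι → K, ∑ i, q i • v i = b ∧ ∀ i, algebraMap K L (q i) = r i := by
  have hvL : LinearIndependent L (fun i => algebraMap K L ∘ v i) :=
    linearIndependent_algebraMap_comp_iff.2 hv
  -- Otherwise `b` could be adjoined to `v` keeping it independent over `K`, hence over `L`.
  have hb : b ∈ Submodule.span K (Set.range v) := by
    by_contra hb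
    have hbL := (linearIndependent_algebraMap_comp_iff (S := L)).2 (hv.option hb)
    refine (linearIndependent_option.1 hbL).2 ?_
    change algebraMap K L ∘ b ∈ Submodule.span L (Set.range fun i => algebraMap K L ∘ v i)
    rw [← h]
    exact Submodule.sum_mem _ fun i _ => Submodule.smul_mem _ _ (Submodule.subset_span ⟨i, rfl⟩)
  obtain ⟨q, hq⟩ := (Submodule.mem_span_range_iff_exists_fun K).1 hb
  refine ⟨q, hq, fun i => ?_⟩
  have hqL : ∑ i, algebraMap K L (q i) • (algebraMap K L ∘ v i) = algebraMap K L ∘ b := by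
    rw [← hq]
    ext j
    simp [Finset.sum_apply, Algebra.smul_def]
  exact congrFun (hvL.fintypeLinearCombination_injective (hqL.trans h.symm)) i

theorem exists_nonneg_rat_sum_smul_eq {L ι ι' : Type*} [Field L] [LinearOrder L]
    [IsStrictOrderedRing L] [Fintype ι] [Finite ι'] {v : ι → ι' → ℚ} {r : ι → L}
    (hr : ∀ i, 0 ≤ r i) {b : ι' → ℚ}
    (h : ∑ i, r i • (fun j => (v i j : L)) = fun j => (b j : L)) :
    ∃ q : ι → ℚ, (∀ i, 0 ≤ q i) ∧ ∑ i, q i • v i = b := by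
  classical
  obtain ⟨t, -, ht, c, hc, hct⟩ :=
    exists_linearIndepOn_nonneg_sum_eq (v := fun i => algebraMap ℚ L ∘ v i) univ r
      fun i _ => hr i
  have hcb : ∑ i : (t : Set ι), c i • (algebraMap ℚ L ∘ v i) = algebraMap ℚ L ∘ b := by
    rw [sum_finset_coe (fun i => c i • (algebraMap ℚ L ∘ v i)) t, hct]
    exact h
  obtain ⟨q, hqb, hqc⟩ :=
    (linearIndependent_algebraMap_comp_iff.1 ht).exists_algebraMap_eq_of_sum_eq hcb
  refine ⟨fun i => if hi : i ∈ t then q ⟨i, hi⟩ else 0, fun i => ?_, ?_⟩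
  · dsimp only
    split_ifs with hi
    · have hqi : 0 ≤ algebraMap ℚ L (q ⟨i, hi⟩) := (hqc ⟨i, hi⟩).symm ▸ hc i hi
      simpa using hqi
    · exact le_rfl
  · rw [← sum_subset t.subset_univ fun i _ hi => by simp [hi], ← sum_coe_sort t]
    simpa using hqb

theorem Rat.den_nsmul_smul_eq_toNat_num_nsmul {M : Type*} [AddCommGroup M] [Module ℚ M] {q : ℚ}
    (hq : 0 ≤ q) (w : M) : q.den • q • w = q.num.toNat • w := by
  rw [← Nat.cast_smul_eq_nsmul ℚ, smul_smul, Rat.den_mul_eq_num, ← natCast_zsmul,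
    Int.toNat_of_nonneg (Rat.num_nonneg.2 hq), Int.cast_smul_eq_zsmul]

theorem AddSubmonoid.exists_nsmul_sum_smul_mem {M ι : Type*} [AddCommGroup M] [Module ℚ M]
    (Λ : AddSubmonoid M) (s : Finset ι) {q : ι → ℚ} (hq : ∀ i ∈ s, 0 ≤ q i)
    {w : ι → M} (hw : ∀ i ∈ s, w i ∈ Λ) : ∃ N : ℕ, 0 < N ∧ N • ∑ i ∈ s, q i • w i ∈ Λ := by
  classical
  induction s using Finset.induction_on with
  | empty => exact ⟨1, one_pos, by simp⟩
  | insert a s ha ih =>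
    obtain ⟨N, hN, hNs⟩ := ih (fun i hi => hq i (mem_insert_of_mem hi))
      (fun i hi => hw i (mem_insert_of_mem hi))
    refine ⟨N * (q a).den, by positivity, ?_⟩
    rw [sum_insert ha, smul_add, mul_nsmul', mul_nsmul,
      Rat.den_nsmul_smul_eq_toNat_num_nsmul (hq a (mem_insert_self a s))]
    exact Λ.add_mem (nsmul_mem (nsmul_mem (hw a (mem_insert_self a s)) _) _) (nsmul_mem hNs _)

theorem AddSubmonoid.neg_mem_of_nsmul_neg_mem {G : Type*} [AddGroup G] (Λ : AddSubmonoid G)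
    {x : G} (hx : x ∈ Λ) {N : ℕ} (hN : 0 < N) (h : N • -x ∈ Λ) : -x ∈ Λ := by
  obtain ⟨k, rfl⟩ := Nat.exists_eq_succ_of_ne_zero hN.ne'
  have hx' : -x = (k + 1) • -x + k • x := by
    rw [succ_nsmul', add_assoc, neg_nsmul, neg_add_cancel, add_zero]
  rw [hx']
  exact Λ.add_mem h (nsmul_mem hx k)

theorem ratCast_mem_nonnegRealCone {n : ℕ} {Λ : AddSubmonoid (Fin n → ℚ)} {x : Fin n → ℚ}
    (hx : x ∈ Λ) : (fun j => (x j : ℝ)) ∈ nonnegRealCone Λ :=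
  ⟨1, fun _ => 1, fun _ => x, fun _ => zero_le_one, fun _ => hx, by simp⟩

theorem statement2_general (n : ℕ) (Λ : AddSubmonoid (Fin n → ℚ))
    (h : ∀ x ∈ nonnegRealCone Λ, -x ∈ nonnegRealCone Λ) :
    ∀ x ∈ Λ, -x ∈ Λ := by
  intro x hx
  obtain ⟨t, r, y, hr, hy, hsum⟩ := h _ (ratCast_mem_nonnegRealCone hx)
  obtain ⟨q, hq, hqy⟩ := exists_nonneg_rat_sum_smul_eq (v := y) (b := -x) hr <| by
    ext j
    simpa [Finset.sum_apply] using (congrFun hsum j).symm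
  obtain ⟨N, hN, hNx⟩ := Λ.exists_nsmul_sum_smul_mem univ (fun i _ => hq i) (fun i _ => hy i)
  rw [hqy] at hNx
  exact Λ.neg_mem_of_nsmul_neg_mem hx hN hNx

/-- If `Λ` is an additive submonoid of `ℚⁿ` such that the cone `ℝ_{≥0}Λ` is a group
(closed under negation), then `Λ` itself is a group (closed under negation). -/
theorem statement2 (n : ℕ) (hn : 0 < n) (Λ : AddSubmonoid (Fin n → ℚ))
    (h : ∀ x ∈ nonnegRealCone Λ, -x ∈ nonnegRealCone Λ) :
    ∀ x ∈ Λ, -x ∈ Λ :=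
  statement2_general n Λ h
end

section
/- Let n be a positive integer, let Λ be an additive submonoid of ℚⁿ that is not a group (i.e., not closed under negation), and let A be an integral domain. Then the semigroup ring D = A[Λ] admits a nontrivial ℝ_{≥0}-grading; that is, there exist additive subgroups D_c of D for c ∈ ℝ_{≥0} such that D = ⊕_{c ∈ ℝ_{≥0}} D_c, D_c · D_{c'} ⊆ D_{c+c'} for all c, c' ≥ 0, and D ≠ D₀. -/
/-!
Any nonzero additive map `w : Λ → ℝ≥0` grades `A[Λ]` by the `w`-degree of monomials, and the
grading is nontrivial because a monomial `x^λ` with `w λ ≠ 0` is not of degree `0`.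

To find `w`, pick a basis of `span_ℚ Λ` inside `Λ`, so that `Λ` becomes a submonoid of `ℚ^t`
containing the standard basis vectors `eᵢ`, with `x ∈ Λ` and `-x ∉ Λ`. Let `C` be the closure
in `ℝ^t` of the cone `ℚ≥0 • Λ`. If `C` contained `p = -x - (1, …, 1)`, the open set
`{y | y < -x}` around `p` would contain a rational point `v` of the cone, and then
`-x = v + ∑ (-xᵢ - vᵢ) eᵢ` would lie in the cone, i.e. `N • (-x) ∈ Λ` for some `N > 0`, which
forces `-x = N • (-x) + (N - 1) • x ∈ Λ`. So Farkas' lemma separates `p` from `C` by a functional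
`f ≥ 0` on `Λ`; since `f p < 0`, `f` is nonzero, hence positive on some `eᵢ`.
-/

universe u

open scoped NNReal

namespace AddSubmonoid

variable {M : Type*} [AddCommGroup M] (Λ : AddSubmonoid M)

/-- When `M` is a `ℚ`-vector space, this is the `ℚ≥0`-cone spanned by `Λ`. -/
def ratCone : AddSubmonoid M where
  carrier := {v | ∃ N : ℕ, 0 < N ∧ N • v ∈ Λ}
  add_mem' := by
    rintro a b ⟨N, hN, ha⟩ ⟨K, hK, hb⟩
    refine ⟨N * K, Nat.mul_pos hN hK, ?_⟩
    rw [smul_add, mul_comm, mul_smul, mul_comm, mul_smul]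
    exact Λ.add_mem (Λ.nsmul_mem ha K) (Λ.nsmul_mem hb N)
  zero_mem' := ⟨1, one_pos, by simp⟩

variable {Λ}

theorem le_ratCone : Λ ≤ Λ.ratCone := fun v hv => ⟨1, one_pos, by simpa using hv⟩

theorem neg_mem_of_neg_mem_ratCone {x : M} (hx : x ∈ Λ) (h : -x ∈ Λ.ratCone) : -x ∈ Λ := by
  obtain ⟨N, hN, hNx⟩ := h
  obtain ⟨k, rfl⟩ := Nat.exists_eq_add_of_lt hN
  have hsplit : -x = (0 + k + 1) • -x + k • x := by
    rw [zero_add, succ_nsmul, smul_neg]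
    abel
  rw [hsplit]
  exact Λ.add_mem hNx (Λ.nsmul_mem hx _)

theorem qsmul_mem_ratCone [Module ℚ M] {q : ℚ} (hq : 0 ≤ q) {v : M} (hv : v ∈ Λ.ratCone) :
    q • v ∈ Λ.ratCone := by
  obtain ⟨N, hN, hNv⟩ := hv
  refine ⟨q.den * N, Nat.mul_pos q.den_pos hN, ?_⟩
  have hnum : ((q.num.toNat : ℕ) : ℚ) = q.num := by
    exact_mod_cast Int.toNat_of_nonneg (Rat.num_nonneg.mpr hq)
  have hscale : ((q.den * N : ℕ) : ℚ) * q = (q.num.toNat * N : ℕ) := by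
    push_cast
    rw [hnum, mul_right_comm, Rat.den_mul_eq_num]
  rw [← Nat.cast_smul_eq_nsmul ℚ, smul_smul, hscale, Nat.cast_smul_eq_nsmul, mul_smul]
  exact Λ.nsmul_mem hNv _

end AddSubmonoid

section Real

variable {ι : Type*} {Λ : AddSubmonoid (ι → ℚ)}

variable (ι) in
noncomputable abbrev ratToReal : (ι → ℚ) →+* (ι → ℝ) := (Rat.castHom ℝ).compLeft ι

@[simp]
theorem ratToReal_single [DecidableEq ι] (i : ι) (q : ℚ) :
    ratToReal ι (Pi.single i q) = Pi.single i (q : ℝ) := by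
  ext j
  by_cases h : j = i <;> simp [h]

theorem smul_mem_closure_ratCone {y : ι → ℝ} (hy : y ∈ closure (ratToReal ι '' Λ.ratCone))
    {r : ℝ} (hr : 0 ≤ r) : r • y ∈ closure (ratToReal ι '' Λ.ratCone) := by
  set T := closure (ratToReal ι '' Λ.ratCone)
  have hrat : ∀ q : ℚ, 0 ≤ q → (q : ℝ) • y ∈ T := fun q hq =>
    map_mem_closure (continuous_const_smul (q : ℝ)) hy <| by
      rintro _ ⟨v, hv, rfl⟩
      exact ⟨q • v, AddSubmonoid.qsmul_mem_ratCone hq hv, by ext; simp⟩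
  -- taking `|s|` makes the set contain all of `ℚ`, so that the density of `ℚ` in `ℝ` applies
  have hclosed : IsClosed {s : ℝ | |s| • y ∈ T} :=
    isClosed_closure.preimage (continuous_abs.smul continuous_const)
  have hrange : Set.range ((↑) : ℚ → ℝ) ⊆ {s : ℝ | |s| • y ∈ T} := by
    rintro _ ⟨q, rfl⟩
    simpa using hrat |q| (abs_nonneg q)
  have hr' : r ∈ {s : ℝ | |s| • y ∈ T} :=
    hclosed.closure_subset_iff.2 hrange <|
      (Rat.denseRange_cast (𝕜 := ℝ)).closure_range ▸ Set.mem_univ r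
  simpa [abs_of_nonneg hr] using hr'

variable (Λ) in
noncomputable def closureRatCone : ProperCone ℝ (ι → ℝ) where
  carrier := closure (ratToReal ι '' Λ.ratCone)
  add_mem' ha hb := map_mem_closure₂ (f := fun u v : ι → ℝ => u + v) continuous_add ha hb <| by
    rintro _ ⟨u, hu, rfl⟩ _ ⟨v, hv, rfl⟩
    exact ⟨u + v, add_mem hu hv, map_add _ _ _⟩
  zero_mem' := subset_closure ⟨0, zero_mem _, map_zero _⟩
  smul_mem' r _ hy := smul_mem_closure_ratCone hy r.2
  isClosed' := isClosed_closure

theorem neg_mem_ratCone_of_forall_le [Fintype ι] [DecidableEq ι]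
    (hsingle : ∀ i, Pi.single i 1 ∈ Λ) {x v : ι → ℚ} (hv : v ∈ Λ.ratCone)
    (hle : ∀ i, v i ≤ -x i) : -x ∈ Λ.ratCone := by
  have hdecomp : -x = v + ∑ i, (-x i - v i) • Pi.single i 1 := by
    ext j
    simp [Finset.sum_apply, Pi.single_apply]
  rw [hdecomp]
  exact add_mem hv <| sum_mem fun i _ =>
    AddSubmonoid.qsmul_mem_ratCone (sub_nonneg.2 (hle i)) (AddSubmonoid.le_ratCone (hsingle i))

theorem exists_nnrealHom_ne_zero_of_single_mem [Fintype ι] [DecidableEq ι]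
    (hsingle : ∀ i, Pi.single i 1 ∈ Λ) {x : ι → ℚ} (hx : x ∈ Λ) (hnx : -x ∉ Λ) :
    ∃ w : Λ →+ ℝ≥0, w ≠ 0 := by
  set p : ι → ℝ := fun i => -x i - 1
  have hp : p ∉ closureRatCone Λ := by
    intro hpK
    have hO : IsOpen {y : ι → ℝ | ∀ i, y i < -x i} := by
      simp only [Set.ofPred_forall]
      exact isOpen_iInter_of_finite fun i => isOpen_lt (continuous_apply i) continuous_const
    obtain ⟨_, hlt, v, hv, rfl⟩ := mem_closure_iff.1 hpK _ hO fun i => by simp [p]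
    refine hnx (Λ.neg_mem_of_neg_mem_ratCone hx (neg_mem_ratCone_of_forall_le hsingle hv ?_))
    intro i
    have hvi := (hlt i).le
    simp only [RingHom.compLeft_apply, Function.comp_apply, Rat.coe_castHom] at hvi
    exact_mod_cast hvi
  obtain ⟨f, hfK, hfp⟩ := (closureRatCone Λ).hyperplane_separation_point hp
  have hfΛ : ∀ v ∈ Λ, 0 ≤ f (ratToReal ι v) := fun v hv =>
    hfK _ (subset_closure ⟨v, AddSubmonoid.le_ratCone hv, rfl⟩)
  obtain ⟨v, hv, hfv⟩ : ∃ v ∈ Λ, 0 < f (ratToReal ι v) := by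
    by_contra! hf
    have hf0 : f = 0 := by
      refine ContinuousLinearMap.coe_injective ((Pi.basisFun ℝ ι).ext fun i => ?_)
      simpa using le_antisymm (hf _ (hsingle i)) (hfΛ _ (hsingle i))
    simp [hf0] at hfp
  refine ⟨{ toFun := fun v => ⟨f (ratToReal ι v), hfΛ v v.2⟩
            map_zero' := Subtype.ext (by simp)
            map_add' := fun u v => Subtype.ext (by simp; rfl) },
    DFunLike.ne_iff.2 ⟨⟨v, hv⟩, fun h => hfv.ne' (by exact congrArg Subtype.val h)⟩⟩

end Real

theorem AddSubmonoid.exists_nnrealHom_ne_zero {M : Type*} [AddCommGroup M] [Module ℚ M]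
    [FiniteDimensional ℚ M] (Λ : AddSubmonoid M) {x : M} (hx : x ∈ Λ) (hnx : -x ∉ Λ) :
    ∃ w : Λ →+ ℝ≥0, w ≠ 0 := by
  classical
  obtain ⟨t, htΛ, htspan, hli⟩ := exists_linearIndependent ℚ (Λ : Set M)
  set V := Submodule.span ℚ (Λ : Set M)
  let b : Module.Basis t ℚ V :=
    (Module.Basis.span hli).map (LinearEquiv.ofEq _ _ (by rw [Subtype.range_coe, htspan]))
  have : Fintype t := have := hli.finite; Fintype.ofFinite t
  obtain ⟨π, hπ⟩ := V.subtype.exists_leftInverse_of_injective V.ker_subtype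
  set P : M →ₗ[ℚ] (t → ℚ) := b.equivFun.toLinearMap ∘ₗ π
  have hPV : ∀ v : V, P v = b.equivFun v := fun v =>
    congrArg b.equivFun (LinearMap.congr_fun hπ v)
  have hsingle : ∀ i, Pi.single i 1 ∈ Λ.map P.toAddMonoidHom := fun i =>
    ⟨i, htΛ i.2, by
      have hbi : (b i : M) = i := by simp [b, Module.Basis.span_apply]
      simpa [hbi, Finsupp.single_eq_pi_single] using hPV (b i)⟩
  have hnx' : -P x ∉ Λ.map P.toAddMonoidHom := by
    rintro ⟨y, hy, hPy⟩
    have hyx : (⟨y, Submodule.subset_span hy⟩ : V) =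
        ⟨-x, V.neg_mem (Submodule.subset_span hx)⟩ := b.equivFun.injective <| by
        rw [← hPV, ← hPV]
        simpa using hPy
    have hyx' : y = -x := congrArg Subtype.val hyx
    exact hnx (hyx' ▸ hy)
  obtain ⟨w, hw⟩ := exists_nnrealHom_ne_zero_of_single_mem hsingle (Λ.mem_map_of_mem _ hx) hnx'
  refine ⟨w.comp (P.toAddMonoidHom.addSubmonoidMap Λ), fun h => hw ?_⟩
  refine (AddMonoidHom.cancel_right (AddMonoidHom.addSubmonoidMap_surjective _ _)).1 ?_
  rw [h, AddMonoidHom.zero_comp]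

theorem statement3_general (n : ℕ) (Λ : AddSubmonoid (Fin n → ℚ))
    (hΛ : ∃ x ∈ Λ, -x ∉ Λ) (A : Type u) [CommRing A] [IsDomain A] :
    ∃ 𝒜 : ℝ≥0 → AddSubgroup (AddMonoidAlgebra A Λ),
      DirectSum.IsInternal 𝒜 ∧
      (∀ c c' : ℝ≥0, ∀ x ∈ 𝒜 c, ∀ y ∈ 𝒜 c', x * y ∈ 𝒜 (c + c')) ∧
      𝒜 0 ≠ ⊤ := by
  classical
  obtain ⟨x, hx, hnx⟩ := hΛ
  obtain ⟨w, hw⟩ := Λ.exists_nnrealHom_ne_zero hx hnx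
  obtain ⟨y, hy⟩ := DFunLike.ne_iff.1 hw
  refine ⟨fun c => (AddMonoidAlgebra.gradeBy A w c).toAddSubgroup,
    AddMonoidAlgebra.gradeBy.isInternal w,
    fun _ _ _ ha _ hb => SetLike.mul_mem_graded (A := AddMonoidAlgebra.gradeBy A w) ha hb,
    fun htop => hy ?_⟩
  have hy0 : AddMonoidAlgebra.single y (1 : A) ∈ AddMonoidAlgebra.gradeBy A w 0 :=
    htop.ge (AddSubgroup.mem_top _)
  exact hy0 y (by simp)

/-- If `Λ` is an additive submonoid of `ℚⁿ` that is not a group (not closed under negation)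
and `A` is an integral domain, then the semigroup ring `D = A[Λ]` admits a nontrivial
`ℝ_{≥0}`-grading: an internal direct sum decomposition `D = ⊕_{c ∈ ℝ_{≥0}} 𝒜 c` into additive
subgroups with `𝒜 c * 𝒜 c' ⊆ 𝒜 (c + c')` and `𝒜 0 ≠ D`. -/
theorem statement3 (n : ℕ) (hn : 0 < n) (Λ : AddSubmonoid (Fin n → ℚ))
    (hΛ : ∃ x ∈ Λ, -x ∉ Λ) (A : Type u) [CommRing A] [IsDomain A] :
    ∃ 𝒜 : ℝ≥0 → AddSubgroup (AddMonoidAlgebra A Λ),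
      DirectSum.IsInternal 𝒜 ∧
      (∀ c c' : ℝ≥0, ∀ x ∈ 𝒜 c, ∀ y ∈ 𝒜 c', x * y ∈ 𝒜 (c + c')) ∧
      𝒜 0 ≠ ⊤ :=
  statement3_general n Λ hΛ A
end

section
/- Let n be a positive integer, let Λ be a finitely generated additive submonoid of ℚⁿ that is not a group (i.e., not closed under negation), and let A be an integral domain. Then the semigroup ring D = A[Λ] admits a nontrivial ℕ-grading; that is, there exist additive subgroups D_c of D for c ∈ ℕ such that D = ⊕_{c ∈ ℕ} D_c, D_c · D_{c'} ⊆ D_{c+c'} for all c, c' ∈ ℕ, and D ≠ D₀. -/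
universe u

/-!
A finitely generated monoid `Λ ⊆ ℚⁿ` that is not a group has `-x ∉ Λ` for some `x ∈ Λ`, and then
`-x` is not even in the rational cone spanned by `Λ` (clearing denominators would put some
`N • -x`, hence `-x = N • -x + (N - 1) • x`, into `Λ`). Farkas' lemma gives a linear functional
that is nonnegative on the generators of `Λ` and positive at `x`; scaled by a common denominator
of its values on the generators it becomes a monoid homomorphism `Λ →+ ℕ` not vanishing at `x`,
and grading `A[Λ]` by it gives the nontrivial `ℕ`-grading.
-/

namespace PointedCone

section Field

variable {𝕜 V : Type*} [Field 𝕜] [AddCommGroup V] [Module 𝕜 V]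

/-- The projection onto `ker f` along `w`, when `f w ≠ 0`. -/
def projAlong (f : Module.Dual 𝕜 V) (w : V) : V →ₗ[𝕜] V :=
  LinearMap.id - (f w)⁻¹ • f.smulRight w

lemma projAlong_apply (f : Module.Dual 𝕜 V) (w x : V) :
    projAlong f w x = x - (f x / f w) • w := by
  simp [projAlong, div_eq_inv_mul, mul_smul]

lemma projAlong_self {f : Module.Dual 𝕜 V} {w : V} (hw : f w ≠ 0) : projAlong f w w = 0 := by
  simp [projAlong_apply, div_self hw]

end Field

variable {𝕜 V : Type*} [Field 𝕜] [LinearOrder 𝕜] [IsStrictOrderedRing 𝕜]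
  [AddCommGroup V] [Module 𝕜 V]

lemma dual_nonneg_of_mem_hull {f : Module.Dual 𝕜 V} {s : Set V} (hf : ∀ u ∈ s, 0 ≤ f u)
    {x : V} (hx : x ∈ hull 𝕜 s) : 0 ≤ f x :=
  (Submodule.span_le (p := comap f (positive 𝕜 𝕜))).mpr hf hx

lemma mem_hull_insert {w x : V} {s : Set V} {a : 𝕜} (ha : 0 ≤ a) (hx : x ∈ hull 𝕜 s) :
    a • w + x ∈ hull 𝕜 (insert w s) :=
  Submodule.mem_span_insert.mpr ⟨⟨a, ha⟩, x, hx, rfl⟩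

lemma notMem_hull_image_projAlong {f : Module.Dual 𝕜 V} {w v : V} {s : Set V}
    (hfs : ∀ u ∈ s, 0 ≤ f u) (hfw : f w < 0) (hfv : f v < 0) (hv : v ∉ hull 𝕜 (insert w s)) :
    projAlong f w v ∉ hull 𝕜 (projAlong f w '' s) := by
  intro h
  obtain ⟨z, hz, hzv⟩ : ∃ z ∈ hull 𝕜 s, projAlong f w z = projAlong f w v := by
    rwa [← mem_map, map, ← Submodule.span_image]
  have hfz := dual_nonneg_of_mem_hull hfs hz
  have hvz : v = (f (v - z) / f w) • w + z := by
    rw [projAlong_apply, projAlong_apply] at hzv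
    rw [map_sub, sub_div, sub_smul]
    linear_combination (norm := module) -hzv
  refine hv (hvz ▸ mem_hull_insert (div_nonneg_of_nonpos ?_ hfw.le) hz)
  rw [map_sub]
  linarith

/-- Farkas' lemma. In the inductive step with `f w < 0`, the generators are projected along `w`
onto `ker f`; a separating functional `g` for the projected data pulls back to `g ∘ₗ projAlong f w`,
which vanishes at `w`. -/
theorem exists_dual_nonneg_of_notMem_hull {s : Finset V} {v : V} (hv : v ∉ hull 𝕜 (s : Set V)) :
    ∃ f : Module.Dual 𝕜 V, (∀ u ∈ s, 0 ≤ f u) ∧ f v < 0 := by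
  classical
  generalize hk : s.card = k
  induction k using Nat.strong_induction_on generalizing s v with
  | _ k ih =>
    rcases k with _ | k
    · rw [Finset.card_eq_zero.mp hk] at hv ⊢
      have hv0 : v ≠ 0 := fun h => hv (h ▸ zero_mem _)
      obtain ⟨f, hf⟩ := Module.Projective.exists_dual_eq_one 𝕜 hv0
      exact ⟨-f, by simp, by simp [hf]⟩
    obtain ⟨w, t, -, rfl, rfl⟩ := Finset.card_eq_succ.mp hk
    rw [Finset.coe_insert] at hv
    have hvt : v ∉ hull 𝕜 (t : Set V) := fun h => hv (Submodule.span_mono (Set.subset_insert _ _) h)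
    obtain ⟨f, hft, hfv⟩ := ih _ (Nat.lt_succ_self _) hvt rfl
    rcases le_or_gt 0 (f w) with hfw | hfw
    · exact ⟨f, Finset.forall_mem_insert _ _ _ |>.mpr ⟨hfw, hft⟩, hfv⟩
    obtain ⟨g, hgt, hgv⟩ := ih _ (Nat.lt_succ_of_le Finset.card_image_le)
      (by simpa using notMem_hull_image_projAlong hft hfw hfv hv) rfl
    refine ⟨g ∘ₗ projAlong f w, Finset.forall_mem_insert _ _ _ |>.mpr ⟨?_, fun u hu => ?_⟩, hgv⟩
    · simp [projAlong_self hfw.ne]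
    · exact hgt _ (Finset.mem_image_of_mem _ hu)

end PointedCone

lemma Rat.exists_natCast_eq_mul_of_den_dvd {q : ℚ} (hq : 0 ≤ q) {d : ℕ} (h : q.den ∣ d) :
    ∃ k : ℕ, (d : ℚ) * q = k := by
  obtain ⟨t, rfl⟩ := h
  refine ⟨t * q.num.toNat, ?_⟩
  have hnum : ((q.num.toNat : ℕ) : ℚ) = q.num := by
    exact_mod_cast Int.toNat_of_nonneg (Rat.num_nonneg.mpr hq)
  push_cast [hnum]
  rw [mul_comm (q.den : ℚ), mul_assoc, Rat.den_mul_eq_num]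

namespace AddSubmonoid

variable {V : Type*} [AddCommGroup V] [Module ℚ V]

lemma exists_nsmul_mem_of_mem_hull (Λ : AddSubmonoid V) {x : V}
    (hx : x ∈ PointedCone.hull ℚ (Λ : Set V)) : ∃ N : ℕ, 0 < N ∧ N • x ∈ Λ := by
  induction hx using Submodule.span_induction with
  | mem x hx => exact ⟨1, one_pos, by simpa using hx⟩
  | zero => exact ⟨1, one_pos, by simp⟩
  | add x y _ _ hx hy =>
    obtain ⟨N, hN, hNx⟩ := hx
    obtain ⟨M, hM, hMy⟩ := hy
    refine ⟨N * M, Nat.mul_pos hN hM, ?_⟩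
    rw [smul_add, mul_nsmul, mul_nsmul']
    exact Λ.add_mem (Λ.nsmul_mem hNx M) (Λ.nsmul_mem hMy N)
  | smul c x _ hx =>
    obtain ⟨N, hN, hNx⟩ := hx
    obtain ⟨k, hk⟩ := Rat.exists_natCast_eq_mul_of_den_dvd c.2 (dvd_refl (c : ℚ).den)
    refine ⟨(c : ℚ).den * N, Nat.mul_pos (c : ℚ).den_pos hN, ?_⟩
    have : ((c : ℚ).den * N) • (c • x) = k • N • x := by
      rw [← Nat.cast_smul_eq_nsmul ℚ, ← Nat.cast_smul_eq_nsmul ℚ k, ← Nat.cast_smul_eq_nsmul ℚ N,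
        Nonneg.mk_smul, smul_smul, smul_smul, ← hk]
      congr 1
      push_cast
      ring
    exact this ▸ Λ.nsmul_mem hNx k

lemma neg_mem_of_neg_mem_hull {Λ : AddSubmonoid V} {x : V} (hx : x ∈ Λ)
    (hnx : -x ∈ PointedCone.hull ℚ (Λ : Set V)) : -x ∈ Λ := by
  obtain ⟨N, hN, hNx⟩ := Λ.exists_nsmul_mem_of_mem_hull hnx
  obtain ⟨k, rfl⟩ := Nat.exists_eq_add_one_of_ne_zero hN.ne'
  have : -x = (k + 1) • -x + k • x := by
    rw [add_nsmul, one_nsmul, smul_neg]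
    abel
  exact this ▸ Λ.add_mem hNx (Λ.nsmul_mem hx k)

end AddSubmonoid

lemma AddMonoidHom.exists_natCast_comp_eq {M R : Type*} [AddZeroClass M] [AddMonoidWithOne R]
    [CharZero R] (g : M →+ R) (hg : ∀ y, ∃ k : ℕ, g y = k) :
    ∃ ψ : M →+ ℕ, ∀ y, (ψ y : R) = g y := by
  choose ψ hψ using hg
  refine ⟨{ toFun := ψ, map_zero' := ?_, map_add' := fun y z => ?_ }, fun y => (hψ y).symm⟩
  · exact_mod_cast (hψ 0).symm.trans g.map_zero
  · apply Nat.cast_injective (R := R)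
    rw [Nat.cast_add, ← hψ, ← hψ, ← hψ, map_add]

namespace AddSubmonoid

variable {V : Type*} [AddCommMonoid V]

lemma exists_natCast_eq_mul_of_mem_closure (S : Finset V) (φ : V →+ ℚ) (hφ : ∀ u ∈ S, 0 ≤ φ u) :
    ∃ m : ℕ, 0 < m ∧ ∀ y ∈ closure (S : Set V), ∃ k : ℕ, (m : ℚ) * φ y = k := by
  refine ⟨∏ u ∈ S, (φ u).den, Finset.prod_pos fun u _ => (φ u).den_pos, fun y hy => ?_⟩
  induction hy using AddSubmonoid.closure_induction with
  | mem u hu => exact Rat.exists_natCast_eq_mul_of_den_dvd (hφ u hu) (Finset.dvd_prod_of_mem _ hu)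
  | zero => exact ⟨0, by simp⟩
  | add y z _ _ hy hz =>
    obtain ⟨k, hk⟩ := hy
    obtain ⟨l, hl⟩ := hz
    exact ⟨k + l, by rw [map_add, mul_add, hk, hl, Nat.cast_add]⟩

lemma exists_natHom_of_nonneg_on_generators (S : Finset V) (φ : V →+ ℚ) (hφ : ∀ u ∈ S, 0 ≤ φ u) :
    ∃ m : ℕ, 0 < m ∧ ∃ ψ : closure (S : Set V) →+ ℕ, ∀ y, (ψ y : ℚ) = m * φ y := by
  obtain ⟨m, hm, hmS⟩ := exists_natCast_eq_mul_of_mem_closure S φ hφ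
  refine ⟨m, hm, (m • φ.comp (closure (S : Set V)).subtype).exists_natCast_comp_eq ?_ |>.imp
    fun ψ hψ y => by simp [hψ y]⟩
  intro y
  simpa using hmS y y.2

end AddSubmonoid

theorem AddMonoidAlgebra.exists_nat_grading_ne_top {R M : Type*} [CommRing R] [Nontrivial R]
    [AddCommMonoid M] (deg : M →+ ℕ) {x : M} (hx : deg x ≠ 0) :
    ∃ 𝒜 : ℕ → AddSubgroup (AddMonoidAlgebra R M),
      DirectSum.IsInternal 𝒜 ∧
      (∀ c c' : ℕ, ∀ a ∈ 𝒜 c, ∀ b ∈ 𝒜 c', a * b ∈ 𝒜 (c + c')) ∧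
      𝒜 0 ≠ ⊤ := by
  refine ⟨fun c => (gradeBy R deg c).toAddSubgroup, gradeBy.isInternal deg,
    fun c c' a ha b hb => SetLike.mul_mem_graded (A := gradeBy R deg) ha hb, fun htop => hx ?_⟩
  have hmem : single x (1 : R) ∈ gradeBy R deg 0 := htop.ge (AddSubgroup.mem_top _)
  exact hmem x (by simp)

theorem statement4_general (n : ℕ) (Λ : AddSubmonoid (Fin n → ℚ))
    (hfg : Λ.FG) (hΛ : ∃ x ∈ Λ, -x ∉ Λ) (A : Type u) [CommRing A] [IsDomain A] :
    ∃ 𝒜 : ℕ → AddSubgroup (AddMonoidAlgebra A Λ),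
      DirectSum.IsInternal 𝒜 ∧
      (∀ c c' : ℕ, ∀ x ∈ 𝒜 c, ∀ y ∈ 𝒜 c', x * y ∈ 𝒜 (c + c')) ∧
      𝒜 0 ≠ ⊤ := by
  obtain ⟨S, rfl⟩ := hfg
  obtain ⟨x, hx, hnx⟩ := hΛ
  have hcone : -x ∉ PointedCone.hull ℚ (S : Set (Fin n → ℚ)) := fun h =>
    hnx (AddSubmonoid.neg_mem_of_neg_mem_hull hx
      (Submodule.span_mono AddSubmonoid.subset_closure h))
  obtain ⟨f, hfS, hfx⟩ := PointedCone.exists_dual_nonneg_of_notMem_hull hcone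
  obtain ⟨m, hm, ψ, hψ⟩ :=
    AddSubmonoid.exists_natHom_of_nonneg_on_generators S f.toAddMonoidHom hfS
  rw [map_neg, neg_lt_zero] at hfx
  have hψx : (0 : ℚ) < ψ ⟨x, hx⟩ := by
    rw [hψ]
    exact mul_pos (Nat.cast_pos.mpr hm) hfx
  exact AddMonoidAlgebra.exists_nat_grading_ne_top ψ (by exact_mod_cast hψx.ne')

/-- If `Λ` is a finitely generated additive submonoid of `ℚⁿ` that is not a group (not
closed under negation) and `A` is an integral domain, then the semigroup ring `D = A[Λ]`
admits a nontrivial `ℕ`-grading: an internal direct sum decomposition `D = ⊕_{c ∈ ℕ} 𝒜 c`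
into additive subgroups with `𝒜 c * 𝒜 c' ⊆ 𝒜 (c + c')` and `𝒜 0 ≠ D`. -/
theorem statement4 (n : ℕ) (hn : 0 < n) (Λ : AddSubmonoid (Fin n → ℚ))
    (hfg : Λ.FG) (hΛ : ∃ x ∈ Λ, -x ∉ Λ) (A : Type u) [CommRing A] [IsDomain A] :
    ∃ 𝒜 : ℕ → AddSubgroup (AddMonoidAlgebra A Λ),
      DirectSum.IsInternal 𝒜 ∧
      (∀ c c' : ℕ, ∀ x ∈ 𝒜 c, ∀ y ∈ 𝒜 c', x * y ∈ 𝒜 (c + c')) ∧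
      𝒜 0 ≠ ⊤ :=
  statement4_general n Λ hfg hΛ A
end

section
/- Let R be an integral domain and let S be an overring of R (a ring with R ⊆ S ⊆ Frac(R)). If R is generically Egyptian, then S is generically Egyptian. -/
universe u

/-- Clearing denominators: in a field, `a = ∑ 1/φ i` iff the denominator-free identity holds. -/
private lemma key_iff {D K : Type*} [CommRing D] [DecidableEq D] [Field K] (φ : D →+* K) (a : K)
    (s : Finset D) (h : ∀ i ∈ s, φ i ≠ 0) :
    a = ∑ i ∈ s, (φ i)⁻¹ ↔
      a * φ (∏ i ∈ s, i) = φ (∑ j ∈ s, ∏ i ∈ s.erase j, i) := by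
  have hp : ∏ i ∈ s, φ i ≠ 0 := Finset.prod_ne_zero_iff.2 h
  have hsum : (∑ i ∈ s, (φ i)⁻¹) * ∏ i ∈ s, φ i = ∑ j ∈ s, ∏ i ∈ s.erase j, φ i := by
    rw [Finset.sum_mul]
    refine Finset.sum_congr rfl fun j hj => ?_
    rw [← Finset.mul_prod_erase _ _ hj, inv_mul_cancel_left₀ (h j hj)]
  rw [map_prod, map_sum]
  simp only [map_prod]
  constructor
  · rintro rfl
    exact hsum
  · intro h'
    exact mul_right_cancel₀ hp (h'.trans hsum.symm)

/-- If a sum-of-reciprocals identity holds under one injective map to a field,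
it holds under all of them. -/
private lemma transfer {D : Type u} [CommRing D] (d : D) (s : Finset D)
    (hs : ∀ i ∈ s, i ≠ 0) {K₀ : Type*} [Field K₀] (ψ : D →+* K₀)
    (hψ : Function.Injective ψ) (heq : ψ d = ∑ i ∈ s, (ψ i)⁻¹) :
    ∀ (K : Type u) [Field K] (φ : D →+* K), Function.Injective φ →
      φ d = ∑ i ∈ s, (φ i)⁻¹ := by
  have hψ0 : ∀ i ∈ s, ψ i ≠ 0 := fun i hi h =>
    hs i hi (hψ (h.trans (map_zero ψ).symm))
  classical
  have hid : d * ∏ i ∈ s, i = ∑ j ∈ s, ∏ i ∈ s.erase j, i := by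
    apply hψ
    rw [map_mul]
    exact (key_iff ψ (ψ d) s hψ0).1 heq
  intro K _ φ hφ
  have hφ0 : ∀ i ∈ s, φ i ≠ 0 := fun i hi h =>
    hs i hi (hφ (h.trans (map_zero φ).symm))
  refine (key_iff φ (φ d) s hφ0).2 ?_
  rw [← map_mul, hid]

/-- A ring hom out of a localization is injective as soon as its restriction to the base
ring is injective and the target is a field. -/
private lemma loc_inj {A L K : Type*} [CommRing A] [CommRing L] [Field K]
    (M : Submonoid A) [Algebra A L] [IsLocalization M L] (ψ : L →+* K)
    (h : Function.Injective fun a => ψ (algebraMap A L a)) :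
    Function.Injective ψ := by
  suffices h0 : ∀ z : L, ψ z = 0 → z = 0 by
    intro x y hxy
    exact sub_eq_zero.mp (h0 (x - y) (by rw [map_sub, hxy, sub_self]))
  intro z hz
  obtain ⟨⟨a, m⟩, hzm⟩ := IsLocalization.surj M z
  have ha : ψ (algebraMap A L a) = 0 := by rw [← hzm, map_mul, hz, zero_mul]
  have ha0 : a = 0 := h (show ψ (algebraMap A L a) = ψ (algebraMap A L 0) by
    rw [map_zero, map_zero, ha])
  have hz0 : z * algebraMap A L m = 0 := by rw [hzm, ha0, map_zero]
  exact ((IsLocalization.map_units L m).mul_left_eq_zero).1 hz0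

set_option maxHeartbeats 1000000 in
/-- If `S` is an overring of `R` (a subring of `Frac(R)` containing `R`) and `R` is
generically Egyptian, then so is `S`. -/
theorem statement6 (R : Type u) [CommRing R] [IsDomain R]
    (S : Subring (FractionRing R))
    (hRS : Set.range (algebraMap R (FractionRing R)) ⊆ (S : Set (FractionRing R)))
    (hR : IsGenericallyEgyptian R) :
    IsGenericallyEgyptian S := by
  classical
  obtain ⟨f, hf, hEg⟩ := hR
  set K₀ := FractionRing R
  have hRinj : Function.Injective (algebraMap R K₀) := IsFractionRing.injective R K₀
  -- the inclusion R → S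
  let ι : R →+* S := (algebraMap R K₀).codRestrict S.toSubsemiring (fun r => hRS ⟨r, rfl⟩)
  have hιval : ∀ r : R, ((ι r : S) : K₀) = algebraMap R K₀ r := fun r => rfl
  have hιinj : Function.Injective ι := fun x y h => hRinj (congrArg Subtype.val h)
  let g : S := ι f
  have hg : g ≠ 0 := fun h => hf (hιinj (show ι f = ι 0 by rw [map_zero]; exact h))
  have hfu : IsUnit (algebraMap R K₀ f) :=
    isUnit_iff_ne_zero.2 (fun h => hf (hRinj (by rw [h, map_zero])))
  have hgu : IsUnit (S.subtype g) := hfu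
  -- the maps to K₀
  let χ : Localization.Away f →+* K₀ := Localization.awayLift (algebraMap R K₀) f hfu
  let ψ : Localization.Away g →+* K₀ := Localization.awayLift S.subtype g hgu
  have hχa : ∀ r : R, χ (algebraMap R (Localization.Away f) r) = algebraMap R K₀ r :=
    fun r => IsLocalization.Away.lift_eq f hfu r
  have hψa : ∀ x : S, ψ (algebraMap S (Localization.Away g) x) = (x : K₀) :=
    fun x => IsLocalization.Away.lift_eq g hgu x
  have hχinj : Function.Injective χ :=
    loc_inj (Submonoid.powers f) χ (by
      have : (fun a => χ (algebraMap R (Localization.Away f) a)) = algebraMap R K₀ := by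
        funext r; exact hχa r
      rw [this]; exact hRinj)
  have hψinj : Function.Injective ψ :=
    loc_inj (Submonoid.powers g) ψ (by
      have : (fun x => ψ (algebraMap S (Localization.Away g) x)) = S.subtype := by
        funext x; exact hψa x
      rw [this]; exact Subtype.val_injective)
  -- the map ρ : R[1/f] → S[1/g]
  let ρ : Localization.Away f →+* Localization.Away g :=
    IsLocalization.Away.map (Localization.Away f) (Localization.Away g) ι f
  have hcomp : ψ.comp ρ = χ := by
    apply IsLocalization.ringHom_ext (Submonoid.powers f)
    ext r
    simp only [RingHom.coe_comp, Function.comp_apply, RingHom.comp_apply]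
    rw [show ρ (algebraMap R (Localization.Away f) r)
        = algebraMap S (Localization.Away g) (ι r) from IsLocalization.map_eq _ r,
      hψa, hχa]
    exact hιval r
  have hψρ : ∀ x, ψ (ρ x) = χ x := fun x => RingHom.congr_fun hcomp x
  letI : DecidableEq (Localization.Away g) := Classical.decEq _
  refine ⟨g, hg, ?_⟩
  intro d hd
  have hψd : ψ d ≠ 0 := fun h => hd (hψinj (by rw [h, map_zero]))
  obtain ⟨a, b, hb, hab⟩ := IsFractionRing.div_surjective (A := R) (ψ d)
  have hbK : algebraMap R K₀ b ≠ 0 :=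
    IsFractionRing.to_map_ne_zero_of_mem_nonZeroDivisors hb
  have haK : algebraMap R K₀ a ≠ 0 := by
    intro h; exact hψd (by rw [← hab, h, zero_div])
  have ha1 : algebraMap R (Localization.Away f) a ≠ 0 := by
    intro h
    exact haK (by rw [← hχa a, h, map_zero])
  obtain ⟨t, ht0, htEq⟩ := hEg _ ha1
  have hA : algebraMap R K₀ a = ∑ i ∈ t, (χ i)⁻¹ := by
    have := htEq K₀ χ hχinj
    rwa [hχa a] at this
  -- denominators in S[1/g]
  let b' : Localization.Away g := algebraMap S (Localization.Away g) (ι b)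
  have hψb' : ψ b' = algebraMap R K₀ b := by rw [hψa]; exact hιval b
  let F : Localization.Away f → Localization.Away g := fun i => ρ i * b'
  have hψF : ∀ i, ψ (F i) = χ i * algebraMap R K₀ b := fun i => by
    show ψ (ρ i * b') = _
    rw [map_mul, hψρ, hψb']
  have hFinj : ∀ x y, F x = F y → x = y := fun x y h =>
    hχinj (mul_right_cancel₀ hbK (by rw [← hψF x, ← hψF y, h]))
  refine ⟨t.image F, ?_, ?_⟩
  · rintro j hj
    obtain ⟨i, hi, rfl⟩ := Finset.mem_image.1 hj
    intro h
    have : χ i * algebraMap R K₀ b = 0 := by rw [← hψF i, h, map_zero]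
    rcases mul_eq_zero.1 this with h' | h'
    · exact ht0 i hi (hχinj (by rw [h', map_zero]))
    · exact hbK h'
  · have heq : ψ d = ∑ j ∈ t.image F, (ψ j)⁻¹ := by
      rw [Finset.sum_image (fun x _ y _ h => hFinj x y h)]
      calc ψ d = algebraMap R K₀ a / algebraMap R K₀ b := hab.symm
        _ = (∑ i ∈ t, (χ i)⁻¹) * (algebraMap R K₀ b)⁻¹ := by
            rw [hA, div_eq_mul_inv]
        _ = ∑ i ∈ t, (χ i * algebraMap R K₀ b)⁻¹ := by
            rw [Finset.sum_mul]
            exact Finset.sum_congr rfl fun i _ => (mul_inv _ _).symm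
        _ = ∑ i ∈ t, (ψ (F i))⁻¹ :=
            Finset.sum_congr rfl fun i _ => by rw [hψF]
    intro K _ φ hφ
    refine transfer d (t.image F) ?_ ψ hψinj heq K φ hφ
    rintro j hj
    obtain ⟨i, hi, rfl⟩ := Finset.mem_image.1 hj
    intro h
    have : χ i * algebraMap R K₀ b = 0 := by rw [← hψF i, h, map_zero]
    rcases mul_eq_zero.1 this with h' | h'
    · exact ht0 i hi (hχinj (by rw [h', map_zero]))
    · exact hbK h'
end

section
/- Let R be an integral domain and let S be an overring of R (a ring with R ⊆ S ⊆ Frac(R)). If R is locally Egyptian, then S is locally Egyptian. -/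
universe u

/-! Let `x ≠ 0` lie in `S[1/f] ⊆ Frac R`. Writing `x = a / c` with `a, c ∈ R` and
`a = ∑ 1/dᵢ` with distinct nonzero `dᵢ ∈ R[1/f]` gives `x = ∑ 1/(c dᵢ)`, and the `c dᵢ` are
distinct nonzero elements of `R[1/f] ⊆ S[1/f]`. Hence the images in `S` of generators of the unit
ideal of `R` witnessing that `R` is locally Egyptian do the same for `S`. -/

open Function

theorem isEgyptian_of_subsingleton (D : Type u) [CommRing D] [Subsingleton D] : IsEgyptian D :=
  fun d hd => absurd (Subsingleton.elim d 0) hd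

theorem map_eq_sum_inv_iff {D K : Type*} [CommRing D] [IsDomain D] [Field K] {θ : D →+* K}
    (hθ : Injective θ) (d : D) (s : Finset D) :
    θ d = ∑ i ∈ s, (θ i)⁻¹ ↔
      algebraMap D (FractionRing D) d = ∑ i ∈ s, (algebraMap D (FractionRing D) i)⁻¹ := by
  simp only [← IsFractionRing.lift_algebraMap (K := FractionRing D) hθ, ← map_inv₀, ← map_sum]
  exact (IsFractionRing.lift (K := FractionRing D) hθ).injective.eq_iff

theorem isEgyptian_of_injective {D : Type u} {K : Type*} [CommRing D] [Field K] (θ : D →+* K)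
    (hθ : Injective θ) (h : ∀ d : D, d ≠ 0 → ∃ s : Finset D, (∀ i ∈ s, i ≠ 0) ∧
      θ d = ∑ i ∈ s, (θ i)⁻¹) :
    IsEgyptian D := by
  have := hθ.isDomain θ
  intro d hd
  obtain ⟨s, hs, hsum⟩ := h d hd
  exact ⟨s, hs, fun L _ ψ hψ => (map_eq_sum_inv_iff hψ d s).2 ((map_eq_sum_inv_iff hθ d s).1 hsum)⟩

theorem IsLocalization.injective_of_injective_comp {R S T : Type*} [CommSemiring R]
    [CommSemiring S] [CommSemiring T] [Algebra R S] (M : Submonoid R) [IsLocalization M S]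
    {g : S →+* T} (hg : Injective (g.comp (algebraMap R S))) : Injective g :=
  (IsLocalization.injective_iff_map_algebraMap_eq M g).2 fun _ _ =>
    ⟨congrArg g, fun h => congrArg _ (hg h)⟩

theorem IsEgyptian.of_ringHom {A B K : Type u} [CommRing A] [CommRing B] [Field K]
    (m : B →+* A) (ψ : A →+* K) (hψ : Injective ψ) (hψm : Injective (ψ.comp m))
    (hfrac : ∀ x : A, ∃ a c : B, c ≠ 0 ∧ ψ x * ψ (m c) = ψ (m a)) (hB : IsEgyptian B) :
    IsEgyptian A := by
  classical
  refine isEgyptian_of_injective ψ hψ fun x hx => ?_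
  obtain ⟨a, c, hc, hxac⟩ := hfrac x
  have hmc : ψ (m c) ≠ 0 := (map_ne_zero_iff (ψ.comp m) hψm).2 hc
  have ha : a ≠ 0 := by
    rintro rfl
    simp only [map_zero, mul_eq_zero] at hxac
    exact hx <| (map_eq_zero_iff ψ hψ).1 (hxac.resolve_right hmc)
  obtain ⟨s, hs, hsum⟩ := hB a ha
  have hsum : ψ (m a) = ∑ i ∈ s, (ψ (m i))⁻¹ := hsum K _ hψm
  have hm_ne : ∀ i ∈ s, ψ (m i) ≠ 0 := fun i hi => (map_ne_zero_iff (ψ.comp m) hψm).2 (hs i hi)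
  have hinj : Set.InjOn (fun i => m (c * i)) s := fun i _ j _ hij => by
    have := congrArg ψ hij
    simp only [map_mul] at this
    exact hψm (mul_left_cancel₀ hmc this)
  refine ⟨s.image fun i => m (c * i), ?_, ?_⟩
  · simp only [Finset.mem_image, forall_exists_index, and_imp]
    rintro _ i hi rfl h
    have := congrArg ψ h
    simp only [map_mul, map_zero] at this
    exact mul_ne_zero hmc (hm_ne i hi) this
  · rw [Finset.sum_image hinj, (eq_mul_inv_iff_mul_eq₀ hmc).2 hxac, hsum, Finset.sum_mul]
    refine Finset.sum_congr rfl fun i _ => ?_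
    simp only [map_mul, mul_inv, mul_comm]

theorem IsEgyptian.away_map {R S K : Type u} [CommRing R] [IsDomain R] [CommRing S] [Field K]
    [Algebra R K] [IsFractionRing R K] (ι : R →+* S) (σ : S →+* K) (hσ : Injective σ)
    (hσι : σ.comp ι = algebraMap R K) {f : R} (hf : IsEgyptian (Localization.Away f)) :
    IsEgyptian (Localization.Away (ι f)) := by
  by_cases hf0 : f = 0
  · subst hf0
    rw [map_zero]
    have := IsLocalization.subsingleton (M := Submonoid.powers (0 : S))
      (S := Localization.Away (0 : S)) (Submonoid.mem_powers 0)
    exact isEgyptian_of_subsingleton _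
  have hσι_apply (r : R) : σ (ι r) = algebraMap R K r := RingHom.congr_fun hσι r
  have hu : IsUnit (σ (ι f)) := by
    rw [hσι_apply, isUnit_iff_ne_zero]
    exact IsFractionRing.to_map_ne_zero_of_mem_nonZeroDivisors (mem_nonZeroDivisors_of_ne_zero hf0)
  set ψ := IsLocalization.Away.lift (S := Localization.Away (ι f)) (ι f) hu
  set m := IsLocalization.Away.map (Localization.Away f) (Localization.Away (ι f)) ι f
  have hψm_apply (r : R) : ψ (m (algebraMap R _ r)) = algebraMap R K r := by
    simp [ψ, m, IsLocalization.Away.map, IsLocalization.map_eq, hσι_apply]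
  have hψ : Injective ψ :=
    IsLocalization.injective_of_injective_comp (Submonoid.powers (ι f)) <| by
      rwa [IsLocalization.Away.lift_comp]
  have hψm : Injective (ψ.comp m) :=
    IsLocalization.injective_of_injective_comp (Submonoid.powers f) fun x y h =>
      IsFractionRing.injective R K (by simpa [hψm_apply] using h)
  refine hf.of_ringHom m ψ hψ hψm fun x => ?_
  obtain ⟨⟨a, c⟩, hac⟩ := IsLocalization.surj (nonZeroDivisors R) (ψ x)
  refine ⟨algebraMap R _ a, algebraMap R _ c, fun hc => ?_, by simpa [hψm_apply] using hac⟩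
  have := congrArg (ψ.comp m) hc
  simp [hψm_apply, nonZeroDivisors.coe_ne_zero] at this

/-- If `S` is an overring of `R` (a subring of `Frac(R)` containing `R`) and `R` is
locally Egyptian, then so is `S`. -/
theorem statement7 (R : Type u) [CommRing R] [IsDomain R]
    (S : Subring (FractionRing R))
    (hRS : Set.range (algebraMap R (FractionRing R)) ⊆ (S : Set (FractionRing R)))
    (hR : IsLocallyEgyptian R) :
    IsLocallyEgyptian S := by
  classical
  obtain ⟨s, hspan, hegy⟩ := hR
  let ι : R →+* S := (algebraMap R (FractionRing R)).codRestrict S fun r => hRS ⟨r, rfl⟩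
  refine ⟨s.image ι, ?_, ?_⟩
  · rw [Finset.coe_image, ← Ideal.map_span, hspan, Ideal.map_top]
  · simp only [Finset.mem_image, forall_exists_index, and_imp]
    rintro _ f hf rfl
    exact (hegy f hf).away_map ι S.subtype Subtype.val_injective rfl
end

section
/- Let D be a generically Egyptian integral domain with fraction field K, let L be a field extension of K, and let R be a ring with D ⊆ R ⊆ L such that R is finitely generated as a D-algebra. Then R is generically Egyptian. -/
universe u

/-!
Inside `L` the localization `A[1/g]` of a subring is again a subring, and generic Egyptianness
survives adjoining the generators one at a time. If `A[1/w]` is Egyptian, so is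
`B = A[u][1/(wu)]`, which contains `u⁻¹ = w/(wu)`: every `b ∈ B` satisfies `b uᴹ = ∑ aᵢ uⁱ`
with `aᵢ ∈ A[1/w]` and `i` below the degree of `u` over `A` (for algebraic `u`, `w` first absorbs
the leading coefficient of a minimal relation, which then becomes monic and reduces every
polynomial in `u`). Expanding `aᵢ = ∑ 1/d` gives `b = ∑ 1/(d uᴹ⁻ⁱ)`, with distinct denominators
because no two of these powers `uⁱ`, `uʲ` are proportional over `A`.
-/

open Polynomial

section

variable {L : Type*} [Field L]

/-- Sums of reciprocals are taken in `L`; `0` is the empty sum. -/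
def IsEgyptianSubring (B : Subring L) : Prop :=
  ∀ x ∈ B, ∃ s : Finset L, (s : Set L) ⊆ B ∧ 0 ∉ s ∧ x = ∑ y ∈ s, y⁻¹

theorem map_eq_sum_inv_iff_fractionRing {E K : Type*} [CommRing E] [IsDomain E] [Field K]
    {φ : E →+* K} (hφ : Function.Injective φ) (d : E) (s : Finset E) :
    φ d = ∑ i ∈ s, (φ i)⁻¹ ↔
      algebraMap E (FractionRing E) d = ∑ i ∈ s, (algebraMap E (FractionRing E) i)⁻¹ := by
  rw [← (IsFractionRing.lift (K := FractionRing E) hφ).injective.eq_iff, map_sum]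
  simp only [map_inv₀, IsFractionRing.lift_algebraMap]

theorem isEgyptian_iff_of_injective {E K : Type*} [CommRing E] [Field K] {φ : E →+* K}
    (hφ : Function.Injective φ) :
    IsEgyptian E ↔
      ∀ d : E, d ≠ 0 → ∃ s : Finset E, (∀ i ∈ s, i ≠ 0) ∧ φ d = ∑ i ∈ s, (φ i)⁻¹ := by
  have := hφ.isDomain φ
  refine ⟨fun h d hd => ?_, fun h d hd => ?_⟩
  · obtain ⟨s, hs, hcert⟩ := h d hd
    exact ⟨s, hs,
      (map_eq_sum_inv_iff_fractionRing hφ d s).2 (hcert _ _ (IsFractionRing.injective E _))⟩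
  · obtain ⟨s, hs, hds⟩ := h d hd
    exact ⟨s, hs, fun K _ ψ hψ => (map_eq_sum_inv_iff_fractionRing hψ d s).2
      ((map_eq_sum_inv_iff_fractionRing hφ d s).1 hds)⟩

theorem isEgyptian_iff_isEgyptianSubring_range {E : Type*} [CommRing E] {φ : E →+* L}
    (hφ : Function.Injective φ) : IsEgyptian E ↔ IsEgyptianSubring φ.range := by
  classical
  rw [isEgyptian_iff_of_injective hφ]
  refine ⟨fun h x hx => ?_, fun h d hd => ?_⟩
  · obtain ⟨d, rfl⟩ := hx
    rcases eq_or_ne d 0 with rfl | hd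
    · exact ⟨∅, by simp, by simp, by simp⟩
    obtain ⟨s, hs, hds⟩ := h d hd
    refine ⟨s.image φ, ?_, ?_, ?_⟩
    · simp [Set.subset_def]
    · simpa [map_eq_zero_iff φ hφ] using hs
    · rwa [Finset.sum_image hφ.injOn]
  · obtain ⟨t, ht, ht0, hdt⟩ := h (φ d) ⟨d, rfl⟩
    rw [RingHom.coe_range, ← Set.image_univ, Finset.subset_set_image_iff] at ht
    obtain ⟨s, -, rfl⟩ := ht
    refine ⟨s, fun i hi hi0 => ht0 (Finset.mem_image.2 ⟨i, hi, by simp [hi0]⟩), ?_⟩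
    rwa [Finset.sum_image hφ.injOn] at hdt

/-- `A[1/g]`, as a subring of `L`. -/
def Subring.away (A : Subring L) (g : A) : Subring L where
  carrier := {x | ∃ k : ℕ, x * (g : L) ^ k ∈ A}
  zero_mem' := ⟨0, by simp⟩
  one_mem' := ⟨0, by simp⟩
  add_mem' := by
    rintro x y ⟨k, hx⟩ ⟨l, hy⟩
    refine ⟨k + l, ?_⟩
    rw [show (x + y) * (g : L) ^ (k + l) = x * g ^ k * g ^ l + y * g ^ l * g ^ k by ring]
    exact add_mem (mul_mem hx (pow_mem g.2 l)) (mul_mem hy (pow_mem g.2 k))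
  mul_mem' := by
    rintro x y ⟨k, hx⟩ ⟨l, hy⟩
    refine ⟨k + l, ?_⟩
    rw [show x * y * (g : L) ^ (k + l) = x * g ^ k * (y * g ^ l) by ring]
    exact mul_mem hx hy
  neg_mem' := by
    rintro x ⟨k, hx⟩
    exact ⟨k, by simpa [neg_mul] using neg_mem hx⟩

namespace Subring

variable {A : Subring L} {g : A} {x : L}

theorem mem_away : x ∈ A.away g ↔ ∃ k : ℕ, x * (g : L) ^ k ∈ A := Iff.rfl

theorem le_away : A ≤ A.away g := fun x hx => ⟨0, by simpa using hx⟩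

end Subring

theorem isEgyptian_localizationAway_iff {D : Type*} [CommRing D] {φ : D →+* L}
    (hφ : Function.Injective φ) {A : Subring L} (hA : φ.range = A) {f : D} (hf : f ≠ 0)
    {g : A} (hg : (g : L) = φ f) :
    IsEgyptian (Localization.Away f) ↔ IsEgyptianSubring (A.away g) := by
  have := hφ.isDomain φ
  have hpowers : Submonoid.powers f ≤ nonZeroDivisors D :=
    powers_le_nonZeroDivisors_of_noZeroDivisors hf
  have hunit : ∀ y : Submonoid.powers f, IsUnit (φ y) := fun y =>
    isUnit_iff_ne_zero.2 ((map_ne_zero_iff φ hφ).2 (nonZeroDivisors.ne_zero (hpowers y.2)))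
  set ψ := IsLocalization.lift (M := Submonoid.powers f) (S := Localization.Away f) hunit
  have hψ : Function.Injective ψ := (IsLocalization.lift_injective_iff hunit).2 fun x y => by
    rw [(IsLocalization.injective (Localization.Away f) hpowers).eq_iff, hφ.eq_iff]
  have hrange : ψ.range = A.away g := by
    subst hA
    ext x
    rw [RingHom.mem_range, Subring.mem_away, hg]
    constructor
    · rintro ⟨y, rfl⟩
      obtain ⟨⟨a, s⟩, rfl⟩ := IsLocalization.mk'_surjective (Submonoid.powers f) y
      obtain ⟨k, hk⟩ := s.2
      beta_reduce at hk
      refine ⟨k, a, ?_⟩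
      rw [← map_pow, hk, mul_comm]
      exact (IsLocalization.lift_mk'_spec (S := Localization.Away f) hunit a _ s).1 rfl
    · rintro ⟨k, a, ha⟩
      refine ⟨IsLocalization.mk' _ a ⟨f ^ k, pow_mem (Submonoid.mem_powers f) k⟩,
        (IsLocalization.lift_mk'_spec _ _ _ _).2 ?_⟩
      rw [ha, map_pow, mul_comm]
  rw [← hrange]
  exact isEgyptian_iff_isEgyptianSubring_range hψ

def IsGenericallyEgyptianSubring (A : Subring L) : Prop :=
  ∃ g : A, g ≠ 0 ∧ IsEgyptianSubring (A.away g)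

theorem IsGenericallyEgyptian.isGenericallyEgyptianSubring_range {D : Type*} [CommRing D]
    (hD : IsGenericallyEgyptian D) {φ : D →+* L} (hφ : Function.Injective φ) :
    IsGenericallyEgyptianSubring φ.range := by
  obtain ⟨f, hf, hE⟩ := hD
  refine ⟨φ.rangeRestrict f, fun h => hf (hφ ?_),
    (isEgyptian_localizationAway_iff hφ rfl hf rfl).1 hE⟩
  simpa using congrArg Subtype.val h

theorem IsGenericallyEgyptianSubring.isGenericallyEgyptian {A : Subring L}
    (hA : IsGenericallyEgyptianSubring A) : IsGenericallyEgyptian A := by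
  obtain ⟨g, hg, hE⟩ := hA
  exact ⟨g, hg, (isEgyptian_localizationAway_iff (φ := A.subtype) Subtype.val_injective
    A.range_subtype hg rfl).2 hE⟩

theorem Finset.sum_inv_image_mul_right [DecidableEq L] (s : Finset L) {c : L} (hc : c ≠ 0) :
    ∑ y ∈ s.image (· * c), y⁻¹ = (∑ y ∈ s, y⁻¹) * c⁻¹ := by
  rw [Finset.sum_image fun x _ y _ h => mul_right_cancel₀ hc h, Finset.sum_mul]
  simp_rw [mul_inv]

theorem IsEgyptianSubring.of_le_of_exists_mul_mem {A B : Subring L} (hA : IsEgyptianSubring A)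
    (hAB : A ≤ B) (hB : ∀ b ∈ B, ∃ c ∈ A, c ≠ 0 ∧ b * c ∈ A) : IsEgyptianSubring B := by
  classical
  intro b hb
  obtain ⟨c, hcA, hc, hbc⟩ := hB b hb
  obtain ⟨s, hsA, hs0, hs⟩ := hA _ hbc
  refine ⟨s.image (· * c), ?_, by simpa [hc] using hs0, ?_⟩
  · intro _ hx
    obtain ⟨y, hy, rfl⟩ := Finset.mem_image.1 hx
    exact B.mul_mem (hAB (hsA hy)) (hAB hcA)
  · rw [Finset.sum_inv_image_mul_right s hc, ← hs, mul_inv_cancel_right₀ hc]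

theorem IsEgyptianSubring.away_mul {A : Subring L} {w c : A}
    (h : IsEgyptianSubring (A.away w)) (hc : c ≠ 0) : IsEgyptianSubring (A.away (w * c)) := by
  refine h.of_le_of_exists_mul_mem (fun x ⟨k, hk⟩ => ⟨k, ?_⟩) fun b ⟨k, hk⟩ =>
    ⟨c ^ k, Subring.le_away (pow_mem c.2 k), pow_ne_zero k (by simpa using hc), k, ?_⟩
  · rw [Subring.coe_mul, mul_pow, ← mul_assoc]
    exact mul_mem hk (pow_mem c.2 k)
  · rwa [mul_assoc, ← mul_pow, mul_comm (c : L), ← Subring.coe_mul]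

def PowersPairwiseIndependent (A : Subring L) (u : L) (N : ℕ) : Prop :=
  ∀ i < N, ∀ j < N, ∀ d ∈ A, ∀ d' ∈ A, d ≠ 0 → d * u ^ j = d' * u ^ i → i = j

namespace PowersPairwiseIndependent

variable {A : Subring L} {u : L} {N : ℕ}

theorem of_aeval_ne_zero (h : ∀ p : A[X], p ≠ 0 → p.natDegree < N → aeval u p ≠ 0) :
    PowersPairwiseIndependent A u N := by
  intro i hi j hj d hd d' hd' hd0 hdd'
  by_contra hij
  refine h (C ⟨d, hd⟩ * X ^ j - C ⟨d', hd'⟩ * X ^ i) (fun h0 => hd0 ?_) ?_ ?_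
  · simpa [Ne.symm hij] using congrArg (coeff · j) h0
  · exact (natDegree_sub_le _ _).trans_lt (max_lt ((natDegree_C_mul_X_pow_le _ _).trans_lt hj)
      ((natDegree_C_mul_X_pow_le _ _).trans_lt hi))
  · simp only [map_sub, map_mul, aeval_C, aeval_X_pow]
    exact sub_eq_zero.2 hdd'

theorem away (h : PowersPairwiseIndependent A u N) {w : A} (hw : w ≠ 0) :
    PowersPairwiseIndependent (A.away w) u N := by
  rintro i hi j hj d ⟨k, hk⟩ d' ⟨l, hl⟩ hd0 hdd'
  refine h i hi j hj _ (mul_mem hk (pow_mem w.2 l)) _ (mul_mem hl (pow_mem w.2 k))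
    (by simp [hd0, hw]) ?_
  linear_combination (w : L) ^ k * (w : L) ^ l * hdd'

theorem mono (h : PowersPairwiseIndependent A u N) {M : ℕ} (hMN : M ≤ N) :
    PowersPairwiseIndependent A u M := fun i hi j hj =>
  h i (hi.trans_le hMN) j (hj.trans_le hMN)

end PowersPairwiseIndependent

theorem IsEgyptianSubring.of_mul_pow_eq_aeval {A B : Subring L} (hA : IsEgyptianSubring A)
    (hAB : A ≤ B) {u : L} (hu : u ≠ 0) (huB : u ∈ B) (hu'B : u⁻¹ ∈ B)
    (h : ∀ b ∈ B, ∃ (M : ℕ) (q : A[X]), b * u ^ M = aeval u q ∧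
      PowersPairwiseIndependent A u (q.natDegree + 1)) :
    IsEgyptianSubring B := by
  classical
  intro b hb
  obtain ⟨M, q, hbq, hq⟩ := h b hb
  choose S hSA hS0 hS using fun i => hA _ (q.coeff i).2
  have hc : ∀ i, u ^ M / u ^ i ≠ 0 := fun i => by simp [hu]
  refine ⟨(Finset.range (q.natDegree + 1)).biUnion fun i => (S i).image (· * (u ^ M / u ^ i)),
    ?_, ?_, ?_⟩
  · intro _ hx
    obtain ⟨i, -, hx⟩ := Finset.mem_biUnion.1 hx
    obtain ⟨y, hy, rfl⟩ := Finset.mem_image.1 hx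
    rw [div_eq_mul_inv, ← inv_pow]
    exact mul_mem (hAB (hSA i hy)) (mul_mem (pow_mem huB M) (pow_mem hu'B i))
  · simp only [Finset.mem_biUnion, Finset.mem_image, not_exists, not_and]
    intro i _ y hy hy0
    exact hS0 i (by rwa [(mul_eq_zero.1 hy0).resolve_right (hc i)] at hy)
  · rw [Finset.sum_biUnion]
    · simp_rw [Finset.sum_inv_image_mul_right _ (hc _), ← hS]
      calc b = aeval u q * (u ^ M)⁻¹ := by rw [← hbq, mul_inv_cancel_right₀ (pow_ne_zero M hu)]
      _ = _ := by
        rw [aeval_eq_sum_range, Finset.sum_mul]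
        refine Finset.sum_congr rfl fun i _ => ?_
        rw [Algebra.smul_def, Algebra.algebraMap_ofSubsemiring_apply]
        field_simp
    · intro i hi j hj hij
      rw [Function.onFun, Finset.disjoint_left]
      intro x hxi hxj
      obtain ⟨d, hd, rfl⟩ := Finset.mem_image.1 hxi
      obtain ⟨d', hd', hdd'⟩ := Finset.mem_image.1 hxj
      refine hij (hq i (Finset.mem_range.1 hi) j (Finset.mem_range.1 hj) d (hSA i hd) d'
        (hSA j hd') (ne_of_mem_of_not_mem hd (hS0 i)) ?_)
      field_simp at hdd'
      linear_combination -hdd'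

theorem Subring.exists_aeval_eq_of_mem_closure_insert {A : Subring L} {u x : L}
    (hx : x ∈ Subring.closure (insert u (A : Set L))) : ∃ p : A[X], aeval u p = x := by
  have : Subring.closure (insert u (A : Set L)) ≤ (aeval (R := A) u).range.toSubring :=
    Subring.closure_le.2 <| Set.insert_subset_iff.2
      ⟨⟨X, aeval_X u⟩, fun a ha => ⟨C ⟨a, ha⟩, aeval_C _ _⟩⟩
  exact this hx

theorem IsAlgebraic.exists_natDegree_minimal {R S : Type*} [CommRing R] [Ring S] [Algebra R S]
    {x : S} (hx : IsAlgebraic R x) :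
    ∃ p : R[X], p ≠ 0 ∧ aeval x p = 0 ∧
      ∀ q : R[X], q ≠ 0 → q.natDegree < p.natDegree → aeval x q ≠ 0 := by
  classical
  have h : ∃ n, ∃ p : R[X], p ≠ 0 ∧ aeval x p = 0 ∧ p.natDegree = n :=
    let ⟨p, hp, hpx⟩ := hx
    ⟨_, p, hp, hpx, rfl⟩
  obtain ⟨p, hp, hpx, hdeg⟩ := Nat.find_spec h
  exact ⟨p, hp, hpx, fun q hq hlt hqx => Nat.find_min h (hdeg ▸ hlt) ⟨q, hq, hqx, rfl⟩⟩

namespace IsGenericallyEgyptianSubring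

variable {A : Subring L}

theorem closure_insert_of_forall_exists_aeval_eq {w : A} (hw : w ≠ 0)
    (hA : IsEgyptianSubring (A.away w)) {u : L} (hu : u ≠ 0)
    (hred : ∀ q : (A.away w)[X], ∃ r : (A.away w)[X], aeval u r = aeval u q ∧
      PowersPairwiseIndependent (A.away w) u (r.natDegree + 1)) :
    IsGenericallyEgyptianSubring (Subring.closure (insert u (A : Set L))) := by
  have hw' : (w : L) ≠ 0 := by simpa using hw
  set Au := Subring.closure (insert u (A : Set L))
  have huAu : u ∈ Au := Subring.subset_closure (Set.mem_insert _ _)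
  have hAAu : A ≤ Au := fun a ha => Subring.subset_closure (Set.mem_insert_of_mem _ ha)
  refine ⟨⟨w * u, mul_mem (hAAu w.2) huAu⟩, fun h => ?_, hA.of_mul_pow_eq_aeval ?_ hu
    ⟨0, by simpa using huAu⟩ ⟨1, ?_⟩ fun b ⟨k, hk⟩ => ?_⟩
  · simpa [hu, hw'] using congrArg Subtype.val h
  · rintro x ⟨k, hk⟩
    refine ⟨k, ?_⟩
    rw [mul_pow, ← mul_assoc]
    exact mul_mem (hAAu hk) (pow_mem huAu k)
  · rw [pow_one, show u⁻¹ * ((w : L) * u) = w by field_simp]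
    exact hAAu w.2
  · obtain ⟨p, hp⟩ := Subring.exists_aeval_eq_of_mem_closure_insert
      (Subring.closure_mono (Set.insert_subset_insert Subring.le_away) hk)
    have hwk : ((w : L) ^ k)⁻¹ ∈ A.away w := ⟨k, by simp [hw']⟩
    obtain ⟨r, hr, hind⟩ := hred (C ⟨_, hwk⟩ * p)
    refine ⟨k, r, ?_, hind⟩
    rw [hr, map_mul, aeval_C, hp, Algebra.algebraMap_ofSubsemiring_apply]
    field_simp
    ring

theorem closure_insert_of_transcendental (hA : IsGenericallyEgyptianSubring A) {u : L}
    (hu : Transcendental A u) :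
    IsGenericallyEgyptianSubring (Subring.closure (insert u (A : Set L))) := by
  obtain ⟨w, hw, hAw⟩ := hA
  have hind (N : ℕ) : PowersPairwiseIndependent A u N :=
    .of_aeval_ne_zero fun p hp _ hpu => hp (transcendental_iff.1 hu p hpu)
  exact closure_insert_of_forall_exists_aeval_eq hw hAw (fun h => hu (h ▸ isAlgebraic_zero))
    fun q => ⟨q, rfl, (hind _).away hw⟩

theorem closure_insert_of_isAlgebraic (hA : IsGenericallyEgyptianSubring A) {u : L}
    (hu0 : u ≠ 0) (hu : IsAlgebraic A u) :
    IsGenericallyEgyptianSubring (Subring.closure (insert u (A : Set L))) := by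
  obtain ⟨w, hw, hAw⟩ := hA
  obtain ⟨p, hp0, hpu, hmin⟩ := hu.exists_natDegree_minimal
  set c := p.leadingCoeff
  have hc : c ≠ 0 := leadingCoeff_ne_zero.2 hp0
  have hc' : (c : L) ≠ 0 := by simpa using hc
  have hcinv : (c : L)⁻¹ ∈ A.away (w * c) := ⟨1, by
    rw [pow_one, Subring.coe_mul, show (c : L)⁻¹ * (w * c) = w by field_simp]
    exact w.2⟩
  set ι := Subring.inclusion (Subring.le_away (g := w * c))
  set P := C ⟨_, hcinv⟩ * p.map ι
  have hPmonic : P.Monic := by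
    refine monic_C_mul_of_mul_leadingCoeff_eq_one ?_
    rw [leadingCoeff_map_of_injective (Subring.inclusion_injective _)]
    ext
    exact inv_mul_cancel₀ hc'
  have hPu : aeval u P = 0 := by
    have hmap : aeval u (p.map ι) = aeval u p := by
      rw [aeval_def, aeval_def, eval₂_map]
      rfl
    rw [map_mul, hmap, hpu, mul_zero]
  have hP1 : P ≠ 1 := by
    rintro h
    simp [h] at hPu
  have hwc : w * c ≠ 0 := mul_ne_zero hw hc
  refine closure_insert_of_forall_exists_aeval_eq hwc (hAw.away_mul hc) hu0
    fun q => ⟨q %ₘ P, aeval_modByMonic_eq_self_of_root hPu,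
      ((PowersPairwiseIndependent.of_aeval_ne_zero hmin).away hwc).mono ?_⟩
  exact (natDegree_modByMonic_lt q hPmonic hP1).trans_le
    ((natDegree_C_mul_le _ _).trans natDegree_map_le)

theorem closure_insert (hA : IsGenericallyEgyptianSubring A) (u : L) :
    IsGenericallyEgyptianSubring (Subring.closure (insert u (A : Set L))) := by
  rcases eq_or_ne u 0 with rfl | hu0
  · rwa [Subring.closure_insert_zero, Subring.closure_eq]
  by_cases hu : IsAlgebraic A u
  · exact hA.closure_insert_of_isAlgebraic hu0 hu
  · exact hA.closure_insert_of_transcendental hu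

theorem closure_union_finset (hA : IsGenericallyEgyptianSubring A) (t : Finset L) :
    IsGenericallyEgyptianSubring (Subring.closure ((A : Set L) ∪ t)) := by
  classical
  induction t using Finset.induction_on with
  | empty => rwa [Finset.coe_empty, Set.union_empty, Subring.closure_eq]
  | insert u t _ ih =>
    have heq : Subring.closure (insert u (Subring.closure ((A : Set L) ∪ t) : Set L)) =
        Subring.closure (insert u ((A : Set L) ∪ t)) := by
      simp only [Set.insert_eq, Subring.closure_union, Subring.closure_eq]
    rw [Finset.coe_insert, Set.union_insert, ← heq]
    exact ih.closure_insert u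

end IsGenericallyEgyptianSubring

end

theorem statement9_general (D : Type*) [CommRing D] (hD : IsGenericallyEgyptian D)
    (L : Type u) [Field L] [Algebra D L]
    (hinj : Function.Injective (algebraMap D L))
    (R : Subalgebra D L) (hR : R.FG) :
    IsGenericallyEgyptian R := by
  obtain ⟨s, rfl⟩ := hR
  have h := (hD.isGenericallyEgyptianSubring_range hinj).closure_union_finset s
  rw [RingHom.coe_range, ← Algebra.adjoin_eq_ring_closure] at h
  exact h.isGenericallyEgyptian

/-- Let `D` be a generically Egyptian domain, `L` a field extension of the fraction field
of `D` (i.e. a field in which `D` embeds), and `R` a `D`-subalgebra of `L` that is finitely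
generated as a `D`-algebra.  Then `R` is generically Egyptian. -/
theorem statement9 (D : Type*) [CommRing D] [IsDomain D] (hD : IsGenericallyEgyptian D)
    (L : Type u) [Field L] [Algebra D L]
    (hinj : Function.Injective (algebraMap D L))
    (R : Subalgebra D L) (hR : R.FG) :
    IsGenericallyEgyptian R :=
  statement9_general D hD L hinj R hR
end

section
/- Let k be a field and let R be an integral domain that is essentially of finite type over k (i.e., R is a localization of a finitely generated k-algebra) with k ⊆ R. Then R is locally Egyptian. -/
/-!
Fix a maximal ideal `m` and generators `a₁, …, aₙ` of `R` as an essentially finite type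
`k`-algebra. For each `i` either `aᵢ ∉ m` or `aᵢ - 1 ∉ m`; inverting the product `f` of
these elements makes every `aᵢ` a unit or a unit plus one, so `R[1/f]` is generated as a
semiring by its units (the nonzero scalars being units). Such a domain is Egyptian: a unit
`u` equals `1/u⁻¹`, so every element is a sum of reciprocals with repetitions, and a repeated
`1/d` is split as `1/(d(1+v)) + 1/(d(1+v⁻¹))` with a unit `v` avoiding finitely many
collisions, which exists when there are infinitely many units. With finitely many units,
`R[1/f]` is finite dimensional over `k`, hence a field. As `m` was arbitrary, finitely many
such `f` generate the unit ideal.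
-/

universe u

lemma isLocallyEgyptian_of_forall_isMaximal {D : Type u} [CommRing D]
    (h : ∀ m : Ideal D, m.IsMaximal → ∃ f ∉ m, IsEgyptian (Localization.Away f)) :
    IsLocallyEgyptian D := by
  have hspan : Ideal.span {f : D | IsEgyptian (Localization.Away f)} = ⊤ := by
    by_contra hne
    obtain ⟨m, hm, hle⟩ := Ideal.exists_le_maximal _ hne
    obtain ⟨f, hfm, hf⟩ := h m hm
    exact hfm (hle (Ideal.subset_span hf))
  obtain ⟨s, hsub, hs⟩ := (Ideal.span_eq_top_iff_finite _).mp hspan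
  exact ⟨s, hs, hsub⟩

def IsEgyptianElem (D : Type*) {K : Type*} [CommRing D] [Field K] [Algebra D K] (x : K) : Prop :=
  ∃ s : Finset D, (∀ i ∈ s, i ≠ 0) ∧ x = ∑ i ∈ s, (algebraMap D K i)⁻¹

lemma isEgyptian_of_forall_isEgyptianElem {D : Type u} [CommRing D] [IsDomain D]
    (h : ∀ d : D, d ≠ 0 → IsEgyptianElem D (algebraMap D (FractionRing D) d)) :
    IsEgyptian D := by
  intro d hd
  obtain ⟨s, hs0, hs⟩ := h d hd
  refine ⟨s, hs0, fun K _ φ hφ => ?_⟩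
  simpa [map_sum, IsFractionRing.lift_algebraMap] using congrArg (IsFractionRing.lift hφ) hs

lemma inv_mul_one_add_add_inv_mul_one_add_inv {K : Type*} [Field K] (d : K) {w : K}
    (hw : w ≠ 0) (hw1 : 1 + w ≠ 0) : (d * (1 + w))⁻¹ + (d * (1 + w⁻¹))⁻¹ = d⁻¹ := by
  rcases eq_or_ne d 0 with rfl | hd
  · simp
  have : 1 + w⁻¹ = (1 + w) / w := by field_simp; ring
  rw [this]
  field_simp

section
variable {D K : Type*} [CommRing D] [IsDomain D] [Field K] [Algebra D K] [IsFractionRing D K]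

lemma exists_inv_add_inv_eq_inv [Infinite Dˣ] {d : D} (hd : d ≠ 0) (B : Finset D) :
    ∃ a e : D, a ∉ B ∧ e ∉ B ∧ a ≠ e ∧ a ≠ 0 ∧ e ≠ 0 ∧
      (algebraMap D K a)⁻¹ + (algebraMap D K e)⁻¹ = (algebraMap D K d)⁻¹ := by
  classical
  have hinj : Function.Injective fun v : D => d * (1 + v) := fun v w h =>
    add_left_cancel (mul_left_cancel₀ hd h)
  obtain ⟨v, hv⟩ := Infinite.exists_notMem_finset ({1, -1} ∪
    B.preimage (fun v : Dˣ => d * (1 + v)) (hinj.comp Units.val_injective).injOn ∪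
    B.preimage (fun v : Dˣ => d * (1 + ↑v⁻¹))
      (hinj.comp (Units.val_injective.comp inv_injective)).injOn)
  simp only [Finset.mem_union, Finset.mem_insert, Finset.mem_singleton, Finset.mem_preimage,
    not_or] at hv
  obtain ⟨⟨⟨hv1, hvn1⟩, ha⟩, he⟩ := hv
  have hne : ∀ w : Dˣ, w ≠ -1 → 1 + (w : D) ≠ 0 := fun w hw h =>
    hw (Units.ext (by simpa using eq_neg_of_add_eq_zero_right h))
  have hinvn1 : v⁻¹ ≠ -1 := by rwa [Ne, inv_eq_iff_eq_inv, inv_neg, inv_one]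
  refine ⟨_, _, ha, he, fun h => ?_, mul_ne_zero hd (hne v hvn1),
    mul_ne_zero hd (hne _ hinvn1), ?_⟩
  · have hvv : (v : D) * v = 1 := by
      simpa using congrArg (· * (v : D)) (add_left_cancel (mul_left_cancel₀ hd h))
    exact (mul_self_eq_one_iff.mp hvv).elim (fun h => hv1 (Units.ext h))
      (fun h => hvn1 (Units.ext (by simpa using h)))
  · have hι := IsFractionRing.injective D K
    simp only [map_mul, map_add, map_one, map_units_inv]
    refine inv_mul_one_add_add_inv_mul_one_add_inv _ ((map_ne_zero_iff _ hι).mpr v.ne_zero) ?_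
    simpa using (map_ne_zero_iff _ hι).mpr (hne v hvn1)

lemma IsEgyptianElem.inv_add [Infinite Dˣ] {d : D} (hd : d ≠ 0) {x : K}
    (hx : IsEgyptianElem D x) : IsEgyptianElem D ((algebraMap D K d)⁻¹ + x) := by
  classical
  obtain ⟨s, hs0, rfl⟩ := hx
  obtain ⟨a, e, has, hes, hae, ha0, he0, hsum⟩ := exists_inv_add_inv_eq_inv (K := K) hd s
  refine ⟨insert a (insert e s), ?_, ?_⟩
  · simp only [Finset.mem_insert]
    rintro i (rfl | rfl | hi)
    exacts [ha0, he0, hs0 i hi]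
  · rw [Finset.sum_insert (by simp [hae, has]), Finset.sum_insert hes, ← add_assoc, hsum]

lemma isEgyptianElem_algebraMap_of_mem_closure [Infinite Dˣ] {d : D}
    (hd : d ∈ AddSubmonoid.closure {u : D | IsUnit u}) :
    IsEgyptianElem D (algebraMap D K d) := by
  induction hd using AddSubmonoid.closure_induction_left with
  | zero => exact ⟨∅, by simp, by simp⟩
  | add_left u hu y _ hy =>
    obtain ⟨u, rfl⟩ := hu
    have hinv : algebraMap D K u = (algebraMap D K ↑u⁻¹)⁻¹ := by simp [map_units_inv]
    rw [map_add, hinv]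
    exact hy.inv_add u⁻¹.ne_zero

omit [IsFractionRing D K] in
lemma isEgyptianElem_algebraMap_of_isUnit {u : D} (hu : IsUnit u) :
    IsEgyptianElem D (algebraMap D K u) := by
  obtain ⟨u, rfl⟩ := hu
  exact ⟨{↑u⁻¹}, by simp, by simp [map_units_inv]⟩

end

theorem isEgyptian_of_closure_isUnit_eq_top (k : Type*) [Field k] {D : Type u} [CommRing D]
    [IsDomain D] [Algebra k D] (h : Subsemiring.closure {u : D | IsUnit u} = ⊤) :
    IsEgyptian D := by
  have hadd : ∀ d : D, d ∈ AddSubmonoid.closure {u : D | IsUnit u} := fun d => by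
    have hd : d ∈ Subsemiring.closure {u : D | IsUnit u} := h ▸ Subsemiring.mem_top d
    rw [Subsemiring.mem_closure_iff] at hd
    convert hd using 2
    exact (congrArg SetLike.coe (Submonoid.closure_eq (IsUnit.submonoid D))).symm
  refine isEgyptian_of_forall_isEgyptianElem fun d hd => ?_
  cases finite_or_infinite Dˣ
  · have : Module.Finite k D := ⟨Submodule.fg_def.mpr ⟨_, Set.finite_range ((↑) : Dˣ → D),
      eq_top_iff.mpr fun x _ => AddSubmonoid.closure_le (S := (Submodule.span k _).toAddSubmonoid)
        |>.mpr Submodule.subset_span (hadd x)⟩⟩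
    have hD : IsField D := isField_of_isIntegral_of_isField' (Field.toIsField k)
    obtain ⟨e, he⟩ := hD.mul_inv_cancel hd
    exact isEgyptianElem_algebraMap_of_isUnit (.of_mul_eq_one e he)
  · exact isEgyptianElem_algebraMap_of_mem_closure (hadd d)

section
variable {k R A : Type*} [Field k] [CommRing R] [CommRing A] [Algebra k R]

lemma map_mem_closure_isUnit_of_mem_adjoin (φ : R →+* A) {σ : Set R}
    (hσ : ∀ a ∈ σ, φ a ∈ Subsemiring.closure {u : A | IsUnit u}) {r : R}
    (hr : r ∈ Algebra.adjoin k σ) : φ r ∈ Subsemiring.closure {u : A | IsUnit u} := by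
  induction hr using Algebra.adjoin_induction with
  | mem a ha => exact hσ a ha
  | algebraMap c =>
    rcases eq_or_ne c 0 with rfl | hc
    · simp
    · exact Subsemiring.subset_closure
        ((isUnit_iff_ne_zero.mpr hc).map (φ.comp (algebraMap k R)))
  | add x y _ _ hx hy => simpa using add_mem hx hy
  | mul x y _ _ hx hy => simpa using mul_mem hx hy

lemma map_mem_closure_isUnit_of_essFiniteType (φ : R →+* A) {σ : Set R}
    (hσ : ∀ s : R, ∃ t ∈ Algebra.adjoin k σ, IsUnit t ∧ s * t ∈ Algebra.adjoin k σ)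
    (hφσ : ∀ a ∈ σ, φ a ∈ Subsemiring.closure {u : A | IsUnit u}) (r : R) :
    φ r ∈ Subsemiring.closure {u : A | IsUnit u} := by
  obtain ⟨t, -, ⟨t, rfl⟩, hrt⟩ := hσ r
  have hr : r = r * t * ↑t⁻¹ := by simp [mul_assoc]
  rw [hr, map_mul]
  exact mul_mem (map_mem_closure_isUnit_of_mem_adjoin φ hφσ hrt)
    (Subsemiring.subset_closure ((t⁻¹).isUnit.map φ))

lemma closure_isUnit_away_eq_top {σ : Set R}
    (hσ : ∀ s : R, ∃ t ∈ Algebra.adjoin k σ, IsUnit t ∧ s * t ∈ Algebra.adjoin k σ) {f : R}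
    (hf : ∀ a ∈ σ, a ∣ f ∨ a - 1 ∣ f) :
    Subsemiring.closure {u : Localization.Away f | IsUnit u} = ⊤ := by
  have hunit : ∀ {a : R}, a ∣ f → IsUnit (algebraMap R (Localization.Away f) a) := fun h =>
    isUnit_of_dvd_unit (map_dvd _ h) (IsLocalization.Away.algebraMap_isUnit f)
  have hσ' : ∀ a ∈ σ, algebraMap R (Localization.Away f) a ∈
      Subsemiring.closure {u : Localization.Away f | IsUnit u} := fun a ha => by
    rcases hf a ha with h | h
    · exact Subsemiring.subset_closure (hunit h)
    · rw [← sub_add_cancel a 1, map_add, map_one]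
      exact add_mem (Subsemiring.subset_closure (hunit h)) (one_mem _)
  refine eq_top_iff.mpr fun x _ => ?_
  obtain ⟨⟨r, s⟩, rfl⟩ := IsLocalization.mk'_surjective (Submonoid.powers f) x
  have hs : IsUnit (IsLocalization.mk' (Localization.Away f) (1 : R) s) :=
    .of_mul_eq_one _ (by rw [IsLocalization.mk'_spec, map_one])
  dsimp only
  rw [IsLocalization.mk'_eq_mul_mk'_one]
  exact mul_mem (map_mem_closure_isUnit_of_essFiniteType _ hσ hσ' r)
    (Subsemiring.subset_closure hs)

end

lemma exists_notMem_isEgyptian_away (k : Type*) [Field k] {R : Type u} [CommRing R] [IsDomain R]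
    [Algebra k R] [Algebra.EssFiniteType k R] (m : Ideal R) [m.IsMaximal] :
    ∃ f ∉ m, IsEgyptian (Localization.Away f) := by
  classical
  obtain ⟨σ, hσ⟩ := (Algebra.essFiniteType_iff k R).mp inferInstance
  let g : R → R := fun a => if a ∈ m then a - 1 else a
  have hg : ∀ a, g a ∉ m := fun a => by
    by_cases ha : a ∈ m
    · simp only [g, if_pos ha]
      exact fun h => (Ideal.ne_top_iff_one m).mp (Ideal.IsMaximal.ne_top ‹_›)
        (by simpa using m.sub_mem ha h)
    · simp [g, ha]
  have hf : ∏ a ∈ σ, g a ∉ m := fun h =>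
    let ⟨a, _, ha⟩ := Ideal.IsPrime.prod_mem_iff.mp h; hg a ha
  have := Localization.Away.isDomain (ne_of_mem_of_not_mem m.zero_mem hf).symm
  refine ⟨_, hf, isEgyptian_of_closure_isUnit_eq_top k (closure_isUnit_away_eq_top hσ ?_)⟩
  intro a ha
  have hdvd := Finset.dvd_prod_of_mem g ha
  by_cases ham : a ∈ m
  · exact .inr (by simpa [g, ham] using hdvd)
  · exact .inl (by simpa [g, ham] using hdvd)

/-- If `k` is a field and `R` is an integral domain containing `k` that is essentially of
finite type over `k` (a localization of a finitely generated `k`-algebra), then `R` is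
locally Egyptian. -/
theorem statement11 (k : Type*) [Field k] (R : Type u) [CommRing R] [IsDomain R]
    [Algebra k R] [Algebra.EssFiniteType k R] :
    IsLocallyEgyptian R :=
  isLocallyEgyptian_of_forall_isMaximal fun m _ => exists_notMem_isEgyptian_away k m
end

section
/- Let A be an integral domain that is an integral extension of ℤ (e.g., the ring of integers of an algebraic number field), and let R be an integral domain that is essentially of finite type over A (i.e., R is a localization of a finitely generated A-algebra, via a ring homomorphism A → R). Then R is locally Egyptian. -/
universe u

/-!
Inverting `f = c · ∏ g x`, with `c ∈ {2, 3}` and `g x ∈ {x, x + 1}` for each generator `x` of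
`R` over `A`, makes every generator a unit or a unit minus one; so `R[1/f]` is generated as a
ring by units and by elements integral over `ℤ`. Sums of reciprocals, repetitions and signs
allowed, form a subring, which contains the units and the integral elements: a nonzero `a`
integral over `ℤ` divides a nonzero integer `m`, so `a = m · (1/w)`. Repetitions are removed by
`1/d = 1/((1 - vⁿ) d) + 1/((1 - v⁻ⁿ) d)` for a unit `v` of infinite order, with `n` chosen to
avoid the finitely many denominators already used. If every unit has finite order, then
`cᵏ = 1` forces positive characteristic, every unit is integral over `ℤ`, hence so is the whole
ring, and it is a field.
-/

section ReciprocalSums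

variable {D : Type u} [CommRing D]

def IsReciprocalSum (z : D) : Prop :=
  ∃ L : Multiset D, (∀ d ∈ L, d ≠ 0) ∧
    ∀ (K : Type u) [Field K] (φ : D →+* K), Function.Injective φ →
      φ z = (L.map fun d => (φ d)⁻¹).sum

namespace IsReciprocalSum

theorem zero : IsReciprocalSum (0 : D) :=
  ⟨0, by simp, fun K _ φ _ => by simp⟩

theorem add {x y : D} (hx : IsReciprocalSum x) (hy : IsReciprocalSum y) :
    IsReciprocalSum (x + y) := by
  obtain ⟨L, hL, hLs⟩ := hx
  obtain ⟨M, hM, hMs⟩ := hy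
  refine ⟨L + M, fun d hd => (Multiset.mem_add.1 hd).elim (hL d) (hM d), fun K _ φ hφ => ?_⟩
  rw [map_add, hLs K φ hφ, hMs K φ hφ, Multiset.map_add, Multiset.sum_add]

theorem neg {x : D} (hx : IsReciprocalSum x) : IsReciprocalSum (-x) := by
  obtain ⟨L, hL, hLs⟩ := hx
  refine ⟨L.map Neg.neg, by simpa using hL, fun K _ φ hφ => ?_⟩
  rw [map_neg, hLs K φ hφ, Multiset.map_map, ← Multiset.sum_map_neg']
  simp [inv_neg]

theorem mul [IsDomain D] {x y : D} (hx : IsReciprocalSum x) (hy : IsReciprocalSum y) :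
    IsReciprocalSum (x * y) := by
  obtain ⟨L, hL, hLs⟩ := hx
  obtain ⟨M, hM, hMs⟩ := hy
  refine ⟨L.bind fun a => M.map (a * ·), ?_, fun K _ φ hφ => ?_⟩
  · simp only [Multiset.mem_bind, Multiset.mem_map]
    rintro _ ⟨a, ha, b, hb, rfl⟩
    exact mul_ne_zero (hL a ha) (hM b hb)
  · rw [map_mul, hLs K φ hφ, hMs K φ hφ, ← Multiset.sum_map_mul_right, Multiset.map_bind,
      Multiset.sum_bind]
    simp [Multiset.map_map, ← Multiset.sum_map_mul_left, mul_comm]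

theorem of_isUnit [Nontrivial D] {u : D} (hu : IsUnit u) : IsReciprocalSum u := by
  obtain ⟨u, rfl⟩ := hu
  exact ⟨{↑u⁻¹}, by simp, fun K _ φ _ => by simp [map_units_inv]⟩

theorem of_mul_eq_intCast [IsDomain D] {a w : D} {m : ℤ} (hw : w ≠ 0) (h : a * w = m) :
    IsReciprocalSum a := by
  have hnat : ∀ {b : D} (n : ℕ), b * w = n → IsReciprocalSum b := by
    intro b n hb
    refine ⟨Multiset.replicate n w, fun d hd => Multiset.eq_of_mem_replicate hd ▸ hw,
      fun K _ φ hφ => ?_⟩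
    have hφw : φ w ≠ 0 := (map_ne_zero_iff φ hφ).2 hw
    rw [Multiset.map_replicate, Multiset.sum_replicate, nsmul_eq_mul, ← map_natCast φ, ← hb,
      map_mul, mul_inv_cancel_right₀ hφw]
  obtain ⟨n, rfl | rfl⟩ := Int.eq_nat_or_neg m
  · exact hnat n (by simpa using h)
  · simpa using (hnat (b := -a) n (by rw [neg_mul, h]; push_cast; ring)).neg

end IsReciprocalSum

def reciprocalSumSubring (D : Type u) [CommRing D] [IsDomain D] : Subring D where
  carrier := {z | IsReciprocalSum z}
  zero_mem' := IsReciprocalSum.zero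
  one_mem' := IsReciprocalSum.of_isUnit isUnit_one
  add_mem' := IsReciprocalSum.add
  neg_mem' := IsReciprocalSum.neg
  mul_mem' := IsReciprocalSum.mul

end ReciprocalSums

section Integrality

variable {D : Type*} [CommRing D] [IsDomain D]

theorem exists_mul_eq_intCast_of_isIntegral {a : D} (ha : a ≠ 0) (hint : IsIntegral ℤ a) :
    ∃ w : D, ∃ m : ℤ, (m : D) ≠ 0 ∧ a * w = m := by
  -- Over the image of `ℤ` in `D` rather than over `ℤ`, the integer found is nonzero in `D`
  -- also in positive characteristic.
  have hint' : IsIntegral (⊥ : Subring D) a := hint.tower_top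
  obtain ⟨z, hz, hz0⟩ := Submodule.exists_mem_ne_zero_of_ne_bot
    (Ideal.comap_ne_bot_of_integral_mem ha (Ideal.mem_span_singleton_self a) hint')
  obtain ⟨w, hw⟩ := Ideal.mem_span_singleton'.1 hz
  obtain ⟨m, hm⟩ := Subring.mem_bot.1 z.2
  refine ⟨w, m, ?_, ?_⟩
  · exact hm ▸ fun h => hz0 (Subtype.ext h)
  · rw [mul_comm, hw, hm]
    rfl

theorem isUnit_of_isIntegral_of_charP (p : ℕ) [Fact p.Prime] [CharP D p] {a : D} (ha : a ≠ 0)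
    (hint : IsIntegral ℤ a) : IsUnit a := by
  obtain ⟨w, m, hm, haw⟩ := exists_mul_eq_intCast_of_isIntegral ha hint
  have hm' : (m : ZMod p) ≠ 0 := fun h => hm <| by
    rw [← map_intCast (ZMod.castHom dvd_rfl D), h, map_zero]
  have hmu : IsUnit (m : D) := by
    simpa using hm'.isUnit.map (ZMod.castHom dvd_rfl D)
  exact isUnit_of_mul_isUnit_left (haw ▸ hmu)

theorem exists_prime_charP_of_natCast_pow_eq_one {c k : ℕ} (hc : c ≠ 1) (hk : k ≠ 0)
    (h : (c : D) ^ k = 1) : ∃ p, p.Prime ∧ CharP D p := by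
  obtain ⟨p, hp⟩ := CharP.exists D
  rcases CharP.char_is_prime_or_zero D p with hprime | rfl
  · exact ⟨p, hprime, hp⟩
  have := CharP.charP_to_charZero D
  have : c ^ k = 1 := by exact_mod_cast h
  simp [hc, hk] at this

end Integrality

theorem IsReciprocalSum.of_isIntegral {D : Type u} [CommRing D] [IsDomain D] {a : D}
    (hint : IsIntegral ℤ a) : IsReciprocalSum a := by
  rcases eq_or_ne a 0 with rfl | ha
  · exact IsReciprocalSum.zero
  obtain ⟨w, m, hm, haw⟩ := exists_mul_eq_intCast_of_isIntegral ha hint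
  exact IsReciprocalSum.of_mul_eq_intCast (right_ne_zero_of_mul (haw ▸ hm : a * w ≠ 0)) haw

section Splitting

variable {D : Type u} [CommRing D]

def ReciprocalsSplit (D : Type u) [CommRing D] : Prop :=
  ∀ d : D, d ≠ 0 → ∀ F : Finset D, ∃ s : Finset D, (∀ e ∈ s, e ≠ 0) ∧ Disjoint s F ∧
    ∀ (K : Type u) [Field K] (φ : D →+* K), Function.Injective φ →
      (φ d)⁻¹ = ∑ e ∈ s, (φ e)⁻¹

theorem inv_one_sub_add_inv_one_sub_inv {K : Type*} [Field K] {y : K} (h0 : y ≠ 0)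
    (h1 : y ≠ 1) : (1 - y)⁻¹ + (1 - y⁻¹)⁻¹ = 1 := by
  have : 1 - y ≠ 0 := sub_ne_zero.2 h1.symm
  field_simp
  ring

theorem reciprocalsSplit_of_not_isOfFinOrder [IsDomain D] {v : Dˣ} (hv : ¬IsOfFinOrder v) :
    ReciprocalsSplit D := by
  classical
  intro d hd F
  set g : ℤ → D := fun n => (1 - ↑(v ^ n)) * d
  have hg : Function.Injective g := by
    intro m n h
    apply injective_zpow_iff_not_isOfFinOrder.2 hv
    simpa [Units.ext_iff] using mul_right_cancel₀ hd h
  have hg0 : ∀ {n}, n ≠ 0 → g n ≠ 0 := fun hn h => hn (hg (h.trans (by simp [g])))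
  have hbad : (g ⁻¹' F ∪ (g ∘ Neg.neg) ⁻¹' F ∪ {0}).Finite :=
    ((F.finite_toSet.preimage hg.injOn).union
      (F.finite_toSet.preimage (hg.comp neg_injective).injOn)).union (Set.finite_singleton 0)
  obtain ⟨n, hn⟩ := hbad.infinite_compl.nonempty
  simp only [Set.mem_compl_iff, Set.mem_union, Set.mem_preimage, Function.comp_apply,
    Finset.mem_coe, Set.mem_singleton_iff, not_or] at hn
  obtain ⟨⟨hnF, hnF'⟩, hn0⟩ := hn
  refine ⟨{g n, g (-n)}, ?_, ?_, fun K _ φ hφ => ?_⟩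
  · simpa using ⟨hg0 hn0, hg0 (neg_ne_zero.2 hn0)⟩
  · simpa [Finset.disjoint_left] using ⟨hnF, hnF'⟩
  · have hy0 : φ ↑(v ^ n) ≠ 0 := ((v ^ n).isUnit.map φ).ne_zero
    have hy1 : φ ↑(v ^ n) ≠ 1 := fun h => hg0 hn0 <| hφ <| by
      rw [map_mul, map_sub, map_one, h, sub_self, zero_mul, map_zero]
    rw [Finset.sum_pair (hg.ne (by omega))]
    simp only [g, map_mul, map_sub, map_one, zpow_neg, map_units_inv]
    rw [mul_inv, mul_inv, ← add_mul, inv_one_sub_add_inv_one_sub_inv hy0 hy1, one_mul]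

theorem ReciprocalsSplit.exists_finset (h : ReciprocalsSplit D) (L : Multiset D)
    (hL : ∀ d ∈ L, d ≠ 0) : ∃ s : Finset D, (∀ e ∈ s, e ≠ 0) ∧
      ∀ (K : Type u) [Field K] (φ : D →+* K), Function.Injective φ →
        (L.map fun d => (φ d)⁻¹).sum = ∑ e ∈ s, (φ e)⁻¹ := by
  classical
  induction L using Multiset.induction_on with
  | empty => exact ⟨∅, by simp, fun K _ φ _ => by simp⟩
  | cons d L ih =>
    obtain ⟨s, hs0, hs⟩ := ih fun e he => hL e (Multiset.mem_cons_of_mem he)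
    obtain ⟨t, ht0, hts, ht⟩ := h d (hL d (Multiset.mem_cons_self d L)) s
    refine ⟨s ∪ t, fun e he => (Finset.mem_union.1 he).elim (hs0 e) (ht0 e),
      fun K _ φ hφ => ?_⟩
    rw [Multiset.map_cons, Multiset.sum_cons, hs K φ hφ, ht K φ hφ,
      Finset.sum_union hts.symm, add_comm]

end Splitting

namespace IsEgyptian

variable {D : Type u} [CommRing D]

theorem of_forall_isUnit (h : ∀ z : D, z ≠ 0 → IsUnit z) : IsEgyptian D := by
  intro d hd
  have : Nontrivial D := ⟨⟨d, 0, hd⟩⟩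
  obtain ⟨u, rfl⟩ := h d hd
  exact ⟨{↑u⁻¹}, by simp, fun K _ φ _ => by simp [map_units_inv]⟩

theorem of_reciprocalsSplit (h : ReciprocalsSplit D) (hsum : ∀ z : D, IsReciprocalSum z) :
    IsEgyptian D := by
  intro d hd
  obtain ⟨L, hL0, hL⟩ := hsum d
  obtain ⟨s, hs0, hs⟩ := h.exists_finset L hL0
  exact ⟨s, hs0, fun K _ φ hφ => (hL K φ hφ).trans (hs K φ hφ)⟩

theorem of_closure_eq_top [IsDomain D]
    (hgen : Subring.closure ({x : D | IsIntegral ℤ x} ∪ {x | IsUnit x}) = ⊤)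
    {c : ℕ} (hc : c ≠ 1) (hcu : IsUnit (c : D)) : IsEgyptian D := by
  have hsum : ∀ z : D, IsReciprocalSum z := by
    have hle : Subring.closure ({x : D | IsIntegral ℤ x} ∪ {x | IsUnit x})
        ≤ reciprocalSumSubring D :=
      Subring.closure_le.2 (Set.union_subset (fun _ => IsReciprocalSum.of_isIntegral)
        (fun _ => IsReciprocalSum.of_isUnit))
    exact fun z => hle (hgen ▸ Subring.mem_top z)
  by_cases hv : ∃ v : Dˣ, ¬IsOfFinOrder v
  · obtain ⟨v, hv⟩ := hv
    exact of_reciprocalsSplit (reciprocalsSplit_of_not_isOfFinOrder hv) hsum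
  push Not at hv
  have hint : ∀ z : D, IsIntegral ℤ z := by
    have hle : Subring.closure ({x : D | IsIntegral ℤ x} ∪ {x | IsUnit x})
        ≤ (integralClosure ℤ D).toSubring := by
      refine Subring.closure_le.2 (Set.union_subset (fun _ => id) ?_)
      rintro _ ⟨u, rfl⟩
      obtain ⟨k, hk, hu⟩ := (hv u).exists_pow_eq_one
      refine IsIntegral.of_pow hk ?_
      rw [← Units.val_pow_eq_pow_val, hu, Units.val_one]
      exact isIntegral_one
    exact fun z => hle (hgen ▸ Subring.mem_top z)
  obtain ⟨k, hk, hck⟩ := (hv hcu.unit).exists_pow_eq_one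
  obtain ⟨p, hp, hchar⟩ := exists_prime_charP_of_natCast_pow_eq_one hc hk.ne'
    (by simpa [Units.ext_iff] using hck)
  have : Fact p.Prime := ⟨hp⟩
  exact of_forall_isUnit fun z hz => isUnit_of_isIntegral_of_charP p hz (hint z)

end IsEgyptian

theorem closure_isIntegral_union_isUnit_eq_top {A R S : Type*} [CommRing A]
    [Algebra.IsIntegral ℤ A] [CommRing R] [Algebra A R] [CommRing S] [Algebra R S]
    (M : Submonoid R) [IsLocalization M S] {σ : Set R}
    (hσ : ∀ r : R, ∃ t ∈ Algebra.adjoin A σ, IsUnit t ∧ r * t ∈ Algebra.adjoin A σ)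
    (hσS : ∀ x ∈ σ, IsUnit (algebraMap R S x) ∨ IsUnit (algebraMap R S (x + 1))) :
    Subring.closure ({x : S | IsIntegral ℤ x} ∪ {x | IsUnit x}) = ⊤ := by
  set W := Subring.closure ({x : S | IsIntegral ℤ x} ∪ {x | IsUnit x})
  have hunit : ∀ {u : S}, IsUnit u → u ∈ W := fun hu => Subring.subset_closure (Or.inr hu)
  have hadjoin : ∀ b ∈ Algebra.adjoin A σ, algebraMap R S b ∈ W := by
    intro b hb
    induction hb using Algebra.adjoin_induction with
    | mem x hx =>
      refine (hσS x hx).elim hunit fun h => ?_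
      simpa using W.sub_mem (hunit h) W.one_mem
    | algebraMap a =>
      exact Subring.subset_closure
        (Or.inl ((Algebra.IsIntegral.isIntegral a).map
          ((algebraMap R S).comp (algebraMap A R)).toIntAlgHom))
    | add x y _ _ hx hy => simpa using W.add_mem hx hy
    | mul x y _ _ hx hy => simpa using W.mul_mem hx hy
  have hR : ∀ r : R, algebraMap R S r ∈ W := by
    intro r
    obtain ⟨t, ht, htu, hrt⟩ := hσ r
    have hu := htu.map (algebraMap R S)
    have : algebraMap R S r = algebraMap R S (r * t) * ↑hu.unit⁻¹ := by
      rw [map_mul, mul_assoc, hu.mul_val_inv, mul_one]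
    exact this ▸ W.mul_mem (hadjoin _ hrt) (hunit (Units.isUnit _))
  refine eq_top_iff.2 fun z _ => ?_
  obtain ⟨⟨r, m⟩, hz⟩ := IsLocalization.surj M z
  have hm := IsLocalization.map_units S m
  have : z = algebraMap R S r * ↑hm.unit⁻¹ := (Units.eq_mul_inv_iff_mul_eq hm.unit).2 hz
  exact this ▸ W.mul_mem (hR r) (hunit (Units.isUnit _))

theorem isEgyptian_away_of_dvd {A : Type*} [CommRing A] [Algebra.IsIntegral ℤ A]
    {R : Type u} [CommRing R] [IsDomain R] [Algebra A R] {σ : Set R}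
    (hσ : ∀ r : R, ∃ t ∈ Algebra.adjoin A σ, IsUnit t ∧ r * t ∈ Algebra.adjoin A σ)
    {f : R} {c : ℕ} (hc : c ≠ 1) (hcf : (c : R) ∣ f) (hσf : ∀ x ∈ σ, x ∣ f ∨ x + 1 ∣ f) :
    IsEgyptian (Localization.Away f) := by
  rcases eq_or_ne f 0 with rfl | hf
  · have := IsLocalization.subsingleton (M := Submonoid.powers (0 : R))
      (S := Localization.Away (0 : R)) (Submonoid.mem_powers 0)
    exact IsEgyptian.of_forall_isUnit fun z hz => (hz (Subsingleton.elim z 0)).elim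
  have : IsDomain (Localization.Away f) :=
    IsLocalization.isDomain_localization (powers_le_nonZeroDivisors_of_noZeroDivisors hf)
  have hunit : ∀ {g : R}, g ∣ f → IsUnit (algebraMap R (Localization.Away f) g) := fun h =>
    isUnit_of_dvd_unit (map_dvd _ h) (IsLocalization.Away.algebraMap_isUnit f)
  refine IsEgyptian.of_closure_eq_top (closure_isIntegral_union_isUnit_eq_top
    (Submonoid.powers f) hσ fun x hx => (hσf x hx).imp hunit hunit) hc ?_
  simpa using hunit hcf

theorem Ideal.span_pair_self_add_one {R : Type*} [CommRing R] (x : R) :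
    Ideal.span {x, x + 1} = ⊤ := by
  refine (Ideal.eq_top_iff_one _).2 ?_
  have := Ideal.sub_mem _
    (Ideal.subset_span (Set.mem_insert_of_mem x (Set.mem_singleton (x + 1))))
    (Ideal.subset_span (Set.mem_insert x ({x + 1} : Set R)))
  rwa [add_sub_cancel_left] at this

section Generators

open scoped Pointwise

variable {R : Type*} [CommRing R] [DecidableEq R]

def egyptianCover (σ : Finset R) : Finset R :=
  {2, 3} * ∏ x ∈ σ, {x, x + 1}

theorem span_egyptianCover (σ : Finset R) : Ideal.span (egyptianCover σ : Set R) = ⊤ := by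
  rw [egyptianCover, Finset.coe_mul, Finset.coe_prod, ← Ideal.span_mul_span', ← Ideal.prod_span]
  have h23 : (({2, 3} : Finset R) : Set R) = {2, 2 + 1} := by norm_num
  simp only [h23, Finset.coe_pair, Ideal.span_pair_self_add_one, ← Ideal.one_eq_top,
    Finset.prod_const_one, one_mul]

theorem dvd_of_mem_egyptianCover {σ : Finset R} {f : R} (hf : f ∈ egyptianCover σ) :
    ((2 : R) ∣ f ∨ (3 : R) ∣ f) ∧ ∀ x ∈ σ, x ∣ f ∨ x + 1 ∣ f := by
  obtain ⟨c, hc, g, hg, rfl⟩ := Finset.mem_mul.1 hf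
  rw [← Finset.mem_coe, Finset.coe_prod, Set.mem_finsetProd] at hg
  obtain ⟨h, hh, rfl⟩ := hg
  refine ⟨?_, fun x hx => ?_⟩
  · simp only [Finset.mem_insert, Finset.mem_singleton] at hc
    rcases hc with rfl | rfl
    exacts [.inl (dvd_mul_right _ _), .inr (dvd_mul_right _ _)]
  · have hhx : h x ∣ c * ∏ i ∈ σ, h i := (Finset.dvd_prod_of_mem h hx).mul_left c
    simp only [Finset.coe_pair, Set.mem_insert_iff, Set.mem_singleton_iff] at hh
    exact (hh hx).imp (fun e => by rwa [← e]) (fun e => by rwa [← e])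

end Generators

theorem statement12_general (A : Type*) [CommRing A] [Algebra.IsIntegral ℤ A]
    (R : Type u) [CommRing R] [IsDomain R]
    [Algebra A R] [Algebra.EssFiniteType A R] :
    IsLocallyEgyptian R := by
  classical
  obtain ⟨σ, hσ⟩ := (Algebra.essFiniteType_iff A R).1 inferInstance
  refine ⟨egyptianCover σ, span_egyptianCover σ, fun f hf => ?_⟩
  obtain ⟨h2 | h3, hσf⟩ := dvd_of_mem_egyptianCover hf
  · exact isEgyptian_away_of_dvd hσ (c := 2) (by norm_num) (by exact_mod_cast h2) hσf
  · exact isEgyptian_away_of_dvd hσ (c := 3) (by norm_num) (by exact_mod_cast h3) hσf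

/-- If `A` is an integral domain that is an integral extension of `ℤ` (i.e. `ℤ` embeds in
`A` and `A` is integral over `ℤ`), and `R` is an integral domain that is essentially of
finite type over `A` (a localization of a finitely generated `A`-algebra, via a ring
homomorphism `A → R`), then `R` is locally Egyptian. -/
theorem statement12 (A : Type*) [CommRing A] [IsDomain A]
    (hZA : Function.Injective (algebraMap ℤ A)) [Algebra.IsIntegral ℤ A]
    (R : Type u) [CommRing R] [IsDomain R]
    [Algebra A R] [Algebra.EssFiniteType A R] :
    IsLocallyEgyptian R :=
  statement12_general A R
end

section
/- Let R be an Egyptian integral domain and let I be a nonzero ideal of R. Then for every nonzero x ∈ R there exist finitely many pairwise distinct nonzero elements i₁, …, iₙ of the ideal I such that x = 1/i₁ + ⋯ + 1/iₙ (equality in the fraction field of R). -/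
universe u

/-- If `R` is an Egyptian domain and `I` is a nonzero ideal of `R`, then every nonzero
`x : R` can be written, in the fraction field of `R`, as a sum of reciprocals of finitely
many pairwise distinct nonzero elements of `I`. -/
theorem statement13 (R : Type u) [CommRing R] [IsDomain R] (hR : IsEgyptian R)
    (I : Ideal R) (hI : I ≠ ⊥) (x : R) (hx : x ≠ 0) :
    ∃ s : Finset R, (∀ i ∈ s, i ∈ I ∧ i ≠ 0) ∧
      algebraMap R (FractionRing R) x =
        ∑ i ∈ s, (algebraMap R (FractionRing R) i)⁻¹ := by
  classical
  obtain ⟨a, haI, ha0⟩ : ∃ a ∈ I, a ≠ 0 := by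
    by_contra h
    push_neg at h
    exact hI (le_antisymm (fun y hy => by simpa using h y hy) bot_le)
  obtain ⟨s, hs0, hsum⟩ := hR (x * a) (mul_ne_zero hx ha0)
  set φ := algebraMap R (FractionRing R)
  have hinj : Function.Injective φ := IsFractionRing.injective R (FractionRing R)
  refine ⟨s.image (a * ·), ?_, ?_⟩
  · intro i hi
    obtain ⟨j, hj, rfl⟩ := Finset.mem_image.mp hi
    exact ⟨I.mul_mem_right j haI, mul_ne_zero ha0 (hs0 j hj)⟩
  · have key := hsum (FractionRing R) φ hinj
    rw [Finset.sum_image (fun i _ j _ h => mul_left_cancel₀ ha0 h)]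
    have hφa : φ a ≠ 0 := fun h => ha0 (hinj (by simpa using h))
    have : ∀ j ∈ s, (φ (a * j))⁻¹ = (φ a)⁻¹ * (φ j)⁻¹ := by
      intro j hj; rw [map_mul, mul_inv]
    rw [Finset.sum_congr rfl this, ← Finset.mul_sum, ← key, map_mul]
    field_simp
end

section
/- Let S be an Egyptian integral domain, let R be a subring of S, and suppose there is a nonzero ideal I of S with I ⊆ R (so I is a common ideal of R and S). Then R is Egyptian. -/
universe u

lemma aux_egy {K : Type*} [Field K] {α : Type*} [DecidableEq α] (s : Finset α) (f : α → K)
    (hf : ∀ i ∈ s, f i ≠ 0) (x : K) :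
    x = ∑ i ∈ s, (f i)⁻¹ ↔ x * ∏ i ∈ s, f i = ∑ i ∈ s, ∏ j ∈ s.erase i, f j := by
  have hprod : ∏ i ∈ s, f i ≠ 0 := Finset.prod_ne_zero_iff.2 hf
  have key : (∑ i ∈ s, (f i)⁻¹) * ∏ i ∈ s, f i = ∑ i ∈ s, ∏ j ∈ s.erase i, f j := by
    rw [Finset.sum_mul]
    refine Finset.sum_congr rfl fun i hi => ?_
    rw [← Finset.mul_prod_erase s f hi, ← mul_assoc, inv_mul_cancel₀ (hf i hi), one_mul]
  rw [← key]
  exact ⟨fun h => by rw [h], fun h => mul_right_cancel₀ hprod h⟩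

/-- If `S` is an Egyptian domain, `R` is a subring of `S`, and `I` is a nonzero ideal of
`S` contained in `R` (a nonzero common ideal of `R` and `S`), then `R` is Egyptian. -/
theorem statement14 (S : Type u) [CommRing S] [IsDomain S] (hS : IsEgyptian S)
    (R : Subring S) (I : Ideal S) (hI : I ≠ ⊥) (hIR : (I : Set S) ⊆ (R : Set S)) :
    IsEgyptian R := by
  classical
  obtain ⟨a, haI, ha0⟩ := Submodule.exists_mem_ne_zero_of_ne_bot hI
  have haa : a * a ≠ 0 := mul_ne_zero ha0 ha0
  have haaI : a * a ∈ I := I.mul_mem_left a haI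
  set g : S → R := fun i => ⟨i * (a * a), hIR (I.mul_mem_left i haaI)⟩ with hg
  have hginj : Function.Injective g := by
    intro x y h
    have := congrArg (Subtype.val) h
    exact mul_right_cancel₀ haa this
  intro d hd
  have hr : (d : S) ≠ 0 := by
    simpa [Subring.coe_eq_zero_iff] using hd
  obtain ⟨s, hs0, hsK⟩ := hS ((d : S) * (a * a)) (mul_ne_zero hr haa)
  -- identity in the fraction field
  set F := FractionRing S
  set ψ := algebraMap S F with hψ
  have hψinj : Function.Injective ψ := IsFractionRing.injective S F
  have h1 : ψ ((d : S) * (a * a)) = ∑ i ∈ s, (ψ i)⁻¹ := hsK F ψ hψinj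
  have hψaa : ψ (a * a) ≠ 0 := fun h => haa (hψinj (by simpa using h))
  have h2 : ψ (d : S) = ∑ i ∈ s, (ψ (i * (a * a)))⁻¹ := by
    rw [eq_comm]
    calc ∑ i ∈ s, (ψ (i * (a * a)))⁻¹
        = (∑ i ∈ s, (ψ i)⁻¹) * (ψ (a * a))⁻¹ := by
          rw [Finset.sum_mul]
          exact Finset.sum_congr rfl fun i hi => by rw [map_mul, mul_inv]
      _ = ψ ((d : S) * (a * a)) * (ψ (a * a))⁻¹ := by rw [h1]
      _ = ψ (d : S) := by rw [map_mul, mul_inv_cancel_right₀ hψaa]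
  have hfne : ∀ i ∈ s, ψ (i * (a * a)) ≠ 0 := fun i hi h =>
    mul_ne_zero (hs0 i hi) haa (hψinj (by simpa using h))
  have h3 := (aux_egy s (fun i => ψ (i * (a * a))) hfne (ψ (d : S))).1 h2
  have h4 : (d : S) * ∏ i ∈ s, (i * (a * a)) = ∑ i ∈ s, ∏ j ∈ s.erase i, (j * (a * a)) := by
    apply hψinj
    rw [map_mul, map_prod, map_sum]
    simpa [map_prod] using h3
  -- identity in R
  have h5 : d * ∏ i ∈ s, g i = ∑ i ∈ s, ∏ j ∈ s.erase i, g j := by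
    apply Subtype.coe_injective
    show ((d * ∏ i ∈ s, g i : R) : S) = ((∑ i ∈ s, ∏ j ∈ s.erase i, g j : R) : S)
    have e1 : ((d * ∏ i ∈ s, g i : R) : S) = (d : S) * ∏ i ∈ s, (i * (a * a)) := by
      push_cast
      rfl
    have e2 : ((∑ i ∈ s, ∏ j ∈ s.erase i, g j : R) : S)
        = ∑ i ∈ s, ∏ j ∈ s.erase i, (j * (a * a)) := by
      push_cast
      rfl
    rw [e1, e2, h4]
  refine ⟨s.image g, ?_, ?_⟩
  · intro i hi
    obtain ⟨j, hj, rfl⟩ := Finset.mem_image.1 hi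
    intro h
    exact mul_ne_zero (hs0 j hj) haa (by simpa [hg, Subtype.ext_iff] using h)
  · intro K _ φ hφ
    have hfne' : ∀ i ∈ s.image g, φ i ≠ 0 := by
      intro i hi h
      obtain ⟨j, hj, rfl⟩ := Finset.mem_image.1 hi
      have : g j = 0 := hφ (by simpa using h)
      exact mul_ne_zero (hs0 j hj) haa (by simpa [hg, Subtype.ext_iff] using this)
    rw [aux_egy (s.image g) (fun i => φ i) hfne' (φ d)]
    rw [Finset.prod_image (fun x _ y _ h => hginj h),
      Finset.sum_image (fun x _ y _ h => hginj h)]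
    have herase : ∀ i ∈ s, ∏ j ∈ (s.image g).erase (g i), φ j
        = ∏ j ∈ s.erase i, φ (g j) := by
      intro i hi
      rw [← Finset.image_erase hginj, Finset.prod_image (fun x _ y _ h => hginj h)]
    rw [Finset.sum_congr rfl herase, ← map_prod, ← map_mul, h5, map_sum]
    exact Finset.sum_congr rfl fun i hi => map_prod φ g (s.erase i)
end
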